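/- arXiv:0806.1532 — 3 statements merged into one kernel-verified Lean document; each statement's English description precedes it below -/
import Mathlib

section
/- In any oriented circle diagram, the degree of an anticlockwise circle (i.e. the total number of clockwise cups and caps lying on that circle) is one less than the total number of caps that the circle contains, and the degree of a clockwise circle is one more than the total number of caps that it contains. -/
/-!
Common combinatorial framework for Brundan–Stroppel, "Highest weight categories arising
from Khovanov's diagram algebra I: cellularity": weights, blocks, the Bruhat order,
cup/cap diagrams, oriented cup/cap/circle diagrams, degrees, and the abstract properties
of the diagrammatically defined multiplications.
-/

namespace BrundanStroppel

open scoped Classical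

inductive Label : Type
  | nought : Label
  | cross : Label
  | down : Label
  | up : Label
  deriving DecidableEq

def Label.flip : Label → Label
  | Label.down => Label.up
  | Label.up => Label.down
  | l => l

/-- A weight: a labelling of the vertices (a set of consecutive integers) of the number
line by `∘`, `×`, `∨` (down) or `∧` (up), such that outside a finite set of vertices it is
impossible to find two vertices labelled `∨ ∧` in that order from left to right. -/
structure Weight where
  label : ℤ → Option Label
  consecutive : ∀ a b c : ℤ, a ≤ b → b ≤ c →
    (label a).isSome → (label c).isSome → (label b).isSome
  tail : ∃ S : Finset ℤ, ∀ i j : ℤ, i < j → i ∉ S → j ∉ S →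
    ¬(label i = some Label.down ∧ label j = some Label.up)

def Weight.support (w : Weight) : Set ℤ := {i : ℤ | (w.label i).isSome}

/-- `Sim v w` (`v ∼ w`): `w` is obtained from `v` by permuting the `∨`'s and the `∧`'s
(and doing nothing to the `∘`'s and `×`'s). -/
def Sim (v w : Weight) : Prop :=
  (∀ i : ℤ, (v.label i).isSome ↔ (w.label i).isSome) ∧
  (∀ i : ℤ, v.label i = some Label.nought ↔ w.label i = some Label.nought) ∧
  (∀ i : ℤ, v.label i = some Label.cross ↔ w.label i = some Label.cross) ∧
  Nonempty ({i : ℤ | v.label i = some Label.down} ≃ {i : ℤ | w.label i = some Label.down}) ∧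
  Nonempty ({i : ℤ | v.label i = some Label.up} ≃ {i : ℤ | w.label i = some Label.up})

/-- A block is a `∼`-equivalence class of weights. -/
def IsBlock (Λ : Set Weight) : Prop := ∃ w : Weight, Λ = {v : Weight | Sim w v}

/-- One step up in the Bruhat order: a `∨ ∧` pair of labels (in this order from left to
right) is swapped to `∧ ∨`; getting bigger means `∨`'s move to the right. -/
def BruhatStep (v w : Weight) : Prop :=
  ∃ i j : ℤ, i < j ∧
    v.label i = some Label.down ∧ v.label j = some Label.up ∧
    w.label i = some Label.up ∧ w.label j = some Label.down ∧
    ∀ k : ℤ, k ≠ i → k ≠ j → w.label k = v.label k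

/-- The Bruhat order on weights. -/
def BruhatLE : Weight → Weight → Prop := Relation.ReflTransGen BruhatStep

def BruhatLT (v w : Weight) : Prop := BruhatLE v w ∧ v ≠ w

/-- The data of a cup diagram (or, mirrored in the number line, of a cap diagram):
finitely many cups (lower semicircles) and some rays (going down to infinity) attached to
vertices of the number line, with no crossings. -/
structure ArcDiagram where
  support : Set ℤ
  consecutive : ∀ a b c : ℤ, a ≤ b → b ≤ c → a ∈ support → c ∈ support → b ∈ support
  cups : Set (ℤ × ℤ)
  rays : Set ℤ
  cups_finite : cups.Finite
  cups_lt : ∀ p ∈ cups, p.1 < p.2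
  cups_subset : ∀ p ∈ cups, p.1 ∈ support ∧ p.2 ∈ support
  rays_subset : rays ⊆ support
  cups_disjoint : ∀ p ∈ cups, ∀ q ∈ cups, p ≠ q →
    p.1 ≠ q.1 ∧ p.1 ≠ q.2 ∧ p.2 ≠ q.1 ∧ p.2 ≠ q.2
  rays_cups_disjoint : ∀ p ∈ cups, ∀ r ∈ rays, r ≠ p.1 ∧ r ≠ p.2
  cups_noncrossing : ∀ p ∈ cups, ∀ q ∈ cups, p.1 < q.1 → q.1 < p.2 → q.2 < p.2
  rays_cups_noncrossing : ∀ p ∈ cups, ∀ r ∈ rays, ¬(p.1 < r ∧ r < p.2)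

/-- The mirror image `c*` of a diagram in the number line, turning a cup diagram into a
cap diagram and vice versa; on the underlying combinatorial data it is the identity. -/
def ArcDiagram.star (c : ArcDiagram) : ArcDiagram := c

/-- A free vertex of a diagram: not the endpoint of any cup or ray. -/
def ArcDiagram.Free (c : ArcDiagram) (i : ℤ) : Prop :=
  i ∈ c.support ∧ i ∉ c.rays ∧ ∀ p ∈ c.cups, i ≠ p.1 ∧ i ≠ p.2

/-- `c w` is an oriented cup diagram. -/
def OrientedCup (c : ArcDiagram) (w : Weight) : Prop :=
  c.support = w.support ∧
  (∀ i : ℤ, c.Free i → w.label i = some Label.nought ∨ w.label i = some Label.cross) ∧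
  (∀ p ∈ c.cups,
    (w.label p.1 = some Label.down ∧ w.label p.2 = some Label.up) ∨
    (w.label p.1 = some Label.up ∧ w.label p.2 = some Label.down)) ∧
  (∀ r ∈ c.rays, w.label r = some Label.down ∨ w.label r = some Label.up) ∧
  (∀ r ∈ c.rays, ∀ t ∈ c.rays, r < t →
    ¬(w.label r = some Label.down ∧ w.label t = some Label.up))

/-- `w b` is an oriented cap diagram iff `b* w` is an oriented cup diagram. -/
def OrientedCap (w : Weight) (b : ArcDiagram) : Prop := OrientedCup b.star w

/-- The degree of the oriented cup diagram `c w`: its number of clockwise cups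
(a cup is clockwise if its leftmost vertex is labelled `∧`). -/
noncomputable def cupDeg (c : ArcDiagram) (w : Weight) : ℕ :=
  {p ∈ c.cups | w.label p.1 = some Label.up}.ncard

/-- The degree of the oriented cap diagram `w b`: its number of clockwise caps. -/
noncomputable def capDeg (w : Weight) (b : ArcDiagram) : ℕ := cupDeg b.star w

/-- `IsUnderline w c` says that `c = w̲`, i.e. `c w` is an oriented cup diagram of
degree `0`, all of whose cups are anticlockwise. -/
def IsUnderline (w : Weight) (c : ArcDiagram) : Prop :=
  OrientedCup c w ∧ ∀ p ∈ c.cups, w.label p.1 = some Label.down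

/-- `IsOverline w b` says that `b = w̄ = (w̲)*`. -/
def IsOverline (w : Weight) (b : ArcDiagram) : Prop := IsUnderline w b.star

/-- `SubW v w` is the relation `v ⊂ w`: `v ∼ w` and `v̲ w` is an oriented cup diagram.
(Equivalently `w ⊃ v`: `w ∼ v` and `w v̄` is an oriented cap diagram.) -/
def SubW (v w : Weight) : Prop :=
  Sim v w ∧ ∃ c : ArcDiagram, IsUnderline v c ∧ OrientedCup c w

def arcAdj (a b : ArcDiagram) (i j : ℤ) : Prop :=
  (i, j) ∈ a.cups ∨ (j, i) ∈ a.cups ∨ (i, j) ∈ b.cups ∨ (j, i) ∈ b.cups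

def reaches (a b : ArcDiagram) : ℤ → ℤ → Prop := Relation.ReflTransGen (arcAdj a b)

/-- `C` is a circle of the circle diagram `a b` (cup diagram `a` glued under cap diagram
`b`): a connected component of the diagram in which every vertex lies both on a cup of `a`
and on a cap of `b`. -/
def IsCircle (a b : ArcDiagram) (C : Set ℤ) : Prop :=
  (∃ v ∈ C, ∀ j : ℤ, j ∈ C ↔ reaches a b v j) ∧
  ∀ i ∈ C, (∃ j : ℤ, (i, j) ∈ a.cups ∨ (j, i) ∈ a.cups) ∧
           (∃ j : ℤ, (i, j) ∈ b.cups ∨ (j, i) ∈ b.cups)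

/-- The vertex `i` lies on a circle (rather than on a line) of the circle diagram `a b`:
its connected component contains no ray. -/
def OnCircle (a b : ArcDiagram) (i : ℤ) : Prop :=
  ∀ j : ℤ, reaches a b i j → j ∉ a.rays ∧ j ∉ b.rays

/-- A Khovanov block of rank `n`: a block consisting of bounded weights having exactly
`n` labels `∨` and `n` labels `∧`. -/
def IsKhovanovBlock (Λ : Set Weight) (n : ℕ) : Prop :=
  IsBlock Λ ∧ ∀ w ∈ Λ, w.support.Finite ∧
    {i : ℤ | w.label i = some Label.down}.ncard = n ∧
    {i : ℤ | w.label i = some Label.up}.ncard = n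

/-- An oriented circle diagram `a λ b` with weight `λ ∈ Λ`. -/
structure OCD (Λ : Set Weight) where
  a : ArcDiagram
  wt : Weight
  b : ArcDiagram
  wt_mem : wt ∈ Λ
  oriented_a : OrientedCup a wt
  oriented_b : OrientedCap wt b

/-- A closed oriented circle diagram: one with no rays (hence no lines). -/
def OCD.Closed {Λ : Set Weight} (x : OCD Λ) : Prop := x.a.rays = ∅ ∧ x.b.rays = ∅

/-- The degree of an oriented circle diagram: its number of clockwise cups and caps. -/
noncomputable def OCD.deg {Λ : Set Weight} (x : OCD Λ) : ℕ :=
  cupDeg x.a x.wt + capDeg x.wt x.b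

/-- The anti-automorphism `(a λ b) ↦ (b* λ a*)` on the level of basis vectors. -/
def OCD.flip {Λ : Set Weight} (x : OCD Λ) : OCD Λ where
  a := x.b
  wt := x.wt
  b := x.a
  wt_mem := x.wt_mem
  oriented_a := x.oriented_b
  oriented_b := x.oriented_a

/-- The bilinear extension to the whole diagram algebra of a multiplication given by
structure constants on basis vectors. -/
noncomputable def extendMul {B : Type} {F : Type} [Field F]
    (m : B → B → (B →₀ F)) (s t : B →₀ F) : B →₀ F :=
  s.sum fun x c => t.sum fun y d => (c * d) • m x y

/-- The properties of the diagrammatically defined multiplication which come directly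
from its construction: the product `(a λ b)(c μ d)` of two basis vectors is zero unless
`b* = c`, the multiplication is associative, and it is compatible with the grading. -/
def IsDiagramMul {F : Type} [Field F] (Λ : Set Weight)
    (m : OCD Λ → OCD Λ → (OCD Λ →₀ F)) : Prop :=
  (∀ x y : OCD Λ, x.b.star ≠ y.a → m x y = 0) ∧
  (∀ x y z : OCD Λ,
    extendMul m (m x y) (Finsupp.single z 1) = extendMul m (Finsupp.single x 1) (m y z)) ∧
  (∀ x y z : OCD Λ, (m x y) z ≠ 0 → z.deg = x.deg + y.deg)

/-- Triangularity of the product `(a λ b)(c μ d)` of two basis vectors, with scalars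
`s a λ b μ ∈ {0,1}` depending only on `a λ b` and `μ` but not on `d`:
`(a λ b)(c μ d) = 0` if `b ≠ c*`; it equals `s(aλb)(μ)·(a μ d) + (†)` if `b = c*` and
`a μ` is oriented; and it equals `(†)` otherwise, where `(†)` is a linear combination of
basis vectors `(a ν d)` with `ν > μ`; moreover `s(aλb)(μ) = 1` if `b = λ̄ = c*` and
`a μ` is oriented. -/
def TriangularAt {F : Type} [Field F] {Λ : Set Weight}
    (m : OCD Λ → OCD Λ → (OCD Λ →₀ F))
    (s : ArcDiagram → Weight → ArcDiagram → Weight → F)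
    (x y : OCD Λ) : Prop :=
  (x.b.star ≠ y.a → m x y = 0) ∧
  (x.b.star = y.a → OrientedCup x.a y.wt →
    (∀ z : OCD Λ, (m x y) z ≠ 0 →
      z.a = x.a ∧ z.b = y.b ∧ (z.wt = y.wt ∨ BruhatLT y.wt z.wt)) ∧
    (∀ z : OCD Λ, z.a = x.a → z.b = y.b → z.wt = y.wt →
      (m x y) z = s x.a x.wt x.b y.wt)) ∧
  (x.b.star = y.a → ¬ OrientedCup x.a y.wt →
    ∀ z : OCD Λ, (m x y) z ≠ 0 → z.a = x.a ∧ z.b = y.b ∧ BruhatLT y.wt z.wt) ∧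
  (x.b.star = y.a → IsOverline x.wt x.b → OrientedCup x.a y.wt →
    s x.a x.wt x.b y.wt = 1)

/-- `w` is the closure `cl(v)` of the bounded weight `v`: `p` new vertices labelled `∨`
are added at the left end of the number line and `q` new vertices labelled `∧` at the
right end. -/
def IsClosureOf (p q : ℕ) (v w : Weight) : Prop :=
  v.support.Finite ∧
  (∀ i ∈ v.support, w.label i = v.label i) ∧
  ∃ L R : Set ℤ,
    w.support = L ∪ v.support ∪ R ∧
    L.Finite ∧ R.Finite ∧ L.ncard = p ∧ R.ncard = q ∧
    (∀ a ∈ L, (∀ i ∈ v.support, a < i) ∧ ∀ r ∈ R, a < r) ∧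
    (∀ r ∈ R, ∀ i ∈ v.support, i < r) ∧
    (∀ a ∈ L, w.label a = some Label.down) ∧
    (∀ r ∈ R, w.label r = some Label.up)

/-- `v ≺ w` for weights: `v` is bounded, its vertices form a subset of the vertices of
`w`, the labels agree on the vertices of `v`, and amongst the remaining vertices of `w`
no two are labelled `∨ ∧` in that order from left to right. -/
def WPrec (v w : Weight) : Prop :=
  v.support.Finite ∧ v.support ⊆ w.support ∧
  (∀ i ∈ v.support, w.label i = v.label i) ∧
  ∀ i j : ℤ, i < j → i ∈ w.support → j ∈ w.support → i ∉ v.support → j ∉ v.support →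
    ¬(w.label i = some Label.down ∧ w.label j = some Label.up)

/-- `Γ ≺ Λ` for blocks. -/
def BPrec (Γ Λ : Set Weight) : Prop := ∃ v ∈ Γ, ∃ w ∈ Λ, WPrec v w

/-!
Encode a circle by its vertex set `C`, the involutions `α` and `β` exchanging the endpoints of
its cups and of its caps, and the orientation `L`. As the caps split into clockwise and
anticlockwise ones, the claim says that (clockwise cups) − (anticlockwise caps) is `1` or `-1`
according to the label of the leftmost vertex `v`. If some cup does not start at `v`, take an
innermost such cup `{p, q}`: no vertex of the circle lies between `p` and `q`, so deleting the
cup and joining the caps at `p` and `q` into a single cap leaves a smaller circle, and a local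
count shows that the difference does not change. Otherwise the circle is one cup under one cap.
-/

open Finset

lemma mem_uIoo_iff_comm {a b c d : ℤ} (hac : a ≠ c) (had : a ≠ d) (hbc : b ≠ c) (hbd : b ≠ d) :
    (c ∈ Set.uIoo a b ↔ d ∈ Set.uIoo a b) ↔ (a ∈ Set.uIoo c d ↔ b ∈ Set.uIoo c d) := by
  simp only [Set.uIoo, Set.mem_Ioo]
  omega

lemma sum_eq_add_add_sum_erase_erase {ι : Type*} [DecidableEq ι] {f : ι → ℕ} {s : Finset ι}
    {a b : ι} (ha : a ∈ s) (hb : b ∈ s) (hab : a ≠ b) :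
    ∑ x ∈ s, f x = f a + f b + ∑ x ∈ (s.erase a).erase b, f x := by
  rw [← s.add_sum_erase f ha, ← (s.erase a).add_sum_erase f (mem_erase.2 ⟨hab.symm, hb⟩),
    add_assoc]

def clockwiseArcs (C : Finset ℤ) (σ : ℤ → ℤ) (L : ℤ → Bool) : ℕ :=
  #{x ∈ C | x < σ x ∧ L x = true}

def anticlockwiseArcs (C : Finset ℤ) (σ : ℤ → ℤ) (L : ℤ → Bool) : ℕ :=
  #{x ∈ C | x < σ x ∧ L x = false}

lemma clockwiseArcs_add_anticlockwiseArcs (C : Finset ℤ) (σ : ℤ → ℤ) (L : ℤ → Bool) :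
    clockwiseArcs C σ L + anticlockwiseArcs C σ L = #{x ∈ C | x < σ x} := by
  rw [clockwiseArcs, anticlockwiseArcs, ← card_union_of_disjoint]
  · congr 1
    ext x
    simp only [mem_union, mem_filter]
    cases L x <;> simp
  · exact disjoint_filter.2 fun x _ h1 h2 => by simp_all

def joinArcs (σ : ℤ → ℤ) (p q : ℤ) (x : ℤ) : ℤ :=
  if x = σ p then σ q else if x = σ q then σ p else σ x

lemma joinArcs_apply_left (σ : ℤ → ℤ) (p q : ℤ) : joinArcs σ p q (σ p) = σ q := by
  simp [joinArcs]

lemma joinArcs_apply_right {σ : ℤ → ℤ} {p q : ℤ} (h : σ p ≠ σ q) :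
    joinArcs σ p q (σ q) = σ p := by
  simp [joinArcs, h.symm]

lemma joinArcs_apply_of_ne {σ : ℤ → ℤ} {p q x : ℤ} (hp : x ≠ σ p) (hq : x ≠ σ q) :
    joinArcs σ p q x = σ x := by
  simp [joinArcs, hp, hq]

/-- The arcs `{x, σ x}` pair off the points of `C`, and no arc separates the two endpoints of
another. -/
structure IsNoncrossingPairing (C : Finset ℤ) (σ : ℤ → ℤ) : Prop where
  map_mem : ∀ x ∈ C, σ x ∈ C
  apply_ne : ∀ x ∈ C, σ x ≠ x
  apply_apply : ∀ x ∈ C, σ (σ x) = x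
  noncrossing : ∀ x ∈ C, ∀ y ∈ C, y ≠ x → y ≠ σ x →
    (y ∈ Set.uIoo x (σ x) ↔ σ y ∈ Set.uIoo x (σ x))

namespace IsNoncrossingPairing

variable {C : Finset ℤ} {σ : ℤ → ℤ}

lemma apply_eq_comm (h : IsNoncrossingPairing C σ) {x y : ℤ} (hx : x ∈ C) (hy : y ∈ C) :
    σ x = y ↔ σ y = x := by
  constructor <;> rintro rfl
  exacts [h.apply_apply x hx, h.apply_apply y hy]

lemma apply_ne_apply (h : IsNoncrossingPairing C σ) {x y : ℤ} (hx : x ∈ C) (hy : y ∈ C)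
    (hxy : x ≠ y) : σ x ≠ σ y := fun e => hxy (by
  rw [← h.apply_apply x hx, e, h.apply_apply y hy])

lemma apply_mem_erase_erase (h : IsNoncrossingPairing C σ) {p q x : ℤ} (hp : p ∈ C)
    (hq : q ∈ C) (hx : x ∈ C) (hxp : x ≠ σ p) (hxq : x ≠ σ q) :
    σ x ∈ (C.erase p).erase q := by
  simp only [mem_erase]
  exact ⟨fun e => hxq ((h.apply_eq_comm hx hq).1 e).symm,
    fun e => hxp ((h.apply_eq_comm hx hp).1 e).symm, h.map_mem x hx⟩

lemma erase_arc (h : IsNoncrossingPairing C σ) {p : ℤ} (hp : p ∈ C) :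
    IsNoncrossingPairing ((C.erase p).erase (σ p)) σ := by
  have mem : ∀ {x}, x ∈ (C.erase p).erase (σ p) → x ∈ C :=
    fun hx => mem_of_mem_erase (mem_of_mem_erase hx)
  refine ⟨fun x hx => ?_, fun x hx => h.apply_ne x (mem hx),
    fun x hx => h.apply_apply x (mem hx), fun x hx y hy => h.noncrossing x (mem hx) y (mem hy)⟩
  obtain ⟨hxσp, hxp, hxC⟩ : x ≠ σ p ∧ x ≠ p ∧ x ∈ C := by simpa using hx
  rw [← h.apply_apply p hp] at hxp
  exact h.apply_mem_erase_erase hp (h.map_mem p hp) hxC hxσp hxp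

lemma eq_pair_of_forall_lt_apply (h : IsNoncrossingPairing C σ) {v : ℤ} (hv : v ∈ C)
    (H : ∀ x ∈ C, x < σ x → x = v) : C = {v, σ v} := by
  refine Subset.antisymm (fun x hx => ?_) (by simp [insert_subset_iff, hv, h.map_mem v hv])
  rcases lt_or_gt_of_ne (h.apply_ne x hx) with hlt | hlt
  · have := H (σ x) (h.map_mem x hx) (by rwa [h.apply_apply x hx])
    simp [← this, h.apply_apply x hx]
  · simp [H x hx hlt]

/-- A point of `C` strictly inside an innermost arc `{p, σ p}` would lie on a shorter arc. -/
lemma notMem_uIoo_of_innermost (h : IsNoncrossingPairing C σ) {p : ℤ} (hp : p ∈ C)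
    (hpσ : p < σ p) (hmin : ∀ x ∈ C, p < x → x < σ x → σ p - p ≤ σ x - x) :
    ∀ y ∈ C, y ∉ Set.uIoo p (σ p) := by
  intro y hy hyI
  have hyp : y ≠ p := by rintro rfl; simp at hyI
  have hyσp : y ≠ σ p := by rintro rfl; simp at hyI
  have hσyI := (h.noncrossing p hp y hy hyp hyσp).1 hyI
  simp only [Set.uIoo_of_lt hpσ, Set.mem_Ioo] at hyI hσyI
  rcases lt_or_gt_of_ne (h.apply_ne y hy) with hlt | hlt
  · have := hmin (σ y) (h.map_mem y hy) hσyI.1 (by rwa [h.apply_apply y hy])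
    rw [h.apply_apply y hy] at this
    omega
  · have := hmin y hy hyI.1 hlt
    omega

lemma join (h : IsNoncrossingPairing C σ) {p q : ℤ} (hp : p ∈ C) (hq : q ∈ C) (hpq : p ≠ q)
    (hσp : σ p ≠ q) (hadj : ∀ y ∈ C, y ∉ Set.uIoo p q) :
    IsNoncrossingPairing ((C.erase p).erase q) (joinArcs σ p q) := by
  have hσq : σ q ≠ p := fun e => hσp ((h.apply_eq_comm hq hp).1 e)
  have hσpq := h.apply_ne_apply hp hq hpq
  have mem : ∀ {x}, x ∈ (C.erase p).erase q → x ≠ q ∧ x ≠ p ∧ x ∈ C := by simp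
  have hσpC : σ p ∈ (C.erase p).erase q := by simp [hσp, h.apply_ne p hp, h.map_mem p hp]
  have hσqC : σ q ∈ (C.erase p).erase q := by simp [hσq, h.apply_ne q hq, h.map_mem q hq]
  -- The joined arc crosses no other arc `{y, σ y}`: neither do the arcs at `p` and `q`, and
  -- `y`, `σ y` do not separate the adjacent points `p` and `q`.
  have key : ∀ y ∈ (C.erase p).erase q, y ≠ σ p → y ≠ σ q →
      (σ p ∈ Set.uIoo y (σ y) ↔ σ q ∈ Set.uIoo y (σ y)) := by
    intro y hy hyp hyq
    obtain ⟨hyq', hyp', hyC⟩ := mem hy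
    obtain ⟨hσyq, hσyp, -⟩ := mem (h.apply_mem_erase_erase hp hq hyC hyp hyq)
    have hp_iff_q : p ∈ Set.uIoo y (σ y) ↔ q ∈ Set.uIoo y (σ y) := by
      have := hadj y hyC
      have := hadj (σ y) (h.map_mem y hyC)
      simp only [Set.uIoo, Set.mem_Ioo] at *
      omega
    rw [← h.noncrossing y hyC p hp hyp'.symm hσyp.symm,
      ← h.noncrossing y hyC q hq hyq'.symm hσyq.symm, hp_iff_q]
  refine ⟨fun x hx => ?_, fun x hx => ?_, fun x hx => ?_, fun x hx y hy hyx hyτx => ?_⟩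
  · by_cases hxp : x = σ p
    · rwa [hxp, joinArcs_apply_left]
    by_cases hxq : x = σ q
    · rwa [hxq, joinArcs_apply_right hσpq]
    rw [joinArcs_apply_of_ne hxp hxq]
    exact h.apply_mem_erase_erase hp hq (mem hx).2.2 hxp hxq
  · by_cases hxp : x = σ p
    · rw [hxp, joinArcs_apply_left]; exact hσpq.symm
    by_cases hxq : x = σ q
    · rw [hxq, joinArcs_apply_right hσpq]; exact hσpq
    rw [joinArcs_apply_of_ne hxp hxq]
    exact h.apply_ne x (mem hx).2.2
  · by_cases hxp : x = σ p
    · rw [hxp, joinArcs_apply_left, joinArcs_apply_right hσpq]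
    by_cases hxq : x = σ q
    · rw [hxq, joinArcs_apply_right hσpq, joinArcs_apply_left]
    obtain ⟨hxq', hxp', hxC⟩ := mem hx
    rw [joinArcs_apply_of_ne hxp hxq, joinArcs_apply_of_ne (h.apply_ne_apply hxC hp hxp')
      (h.apply_ne_apply hxC hq hxq'), h.apply_apply x hxC]
  obtain ⟨hyq', hyp', hyC⟩ := mem hy
  have hσyp := h.apply_ne_apply hyC hp hyp'
  have hσyq := h.apply_ne_apply hyC hq hyq'
  by_cases hxp : x = σ p
  · subst hxp
    rw [joinArcs_apply_left] at hyτx ⊢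
    rw [joinArcs_apply_of_ne hyx hyτx,
      mem_uIoo_iff_comm hyx.symm hσyp.symm hyτx.symm hσyq.symm]
    exact key y hy hyx hyτx
  by_cases hxq : x = σ q
  · subst hxq
    rw [joinArcs_apply_right hσpq] at hyτx ⊢
    rw [joinArcs_apply_of_ne hyτx hyx, Set.uIoo_comm,
      mem_uIoo_iff_comm hyτx.symm hσyp.symm hyx.symm hσyq.symm]
    exact key y hy hyτx hyx
  rw [joinArcs_apply_of_ne hxp hxq] at hyτx ⊢
  by_cases hyp : y = σ p
  · rw [hyp, joinArcs_apply_left]; exact key x hx hxp hxq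
  by_cases hyq : y = σ q
  · rw [hyq, joinArcs_apply_right hσpq]; exact (key x hx hxp hxq).symm
  rw [joinArcs_apply_of_ne hyp hyq]
  exact h.noncrossing x (mem hx).2.2 y hyC hyx hyτx

lemma clockwiseArcs_erase_arc (h : IsNoncrossingPairing C σ) {p : ℤ} (hp : p ∈ C)
    (hpσ : p < σ p) (L : ℤ → Bool) :
    clockwiseArcs C σ L =
      clockwiseArcs ((C.erase p).erase (σ p)) σ L + if L p then 1 else 0 := by
  simp only [clockwiseArcs, card_filter]
  rw [sum_eq_add_add_sum_erase_erase hp (h.map_mem p hp) hpσ.ne, h.apply_apply p hp]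
  cases L p <;> simp [hpσ, hpσ.le, add_comm]

lemma anticlockwiseArcs_join (h : IsNoncrossingPairing C σ) {p q : ℤ} (hp : p ∈ C) (hq : q ∈ C)
    (hpq : p < q) (hσp : σ p ≠ q) (hadj : ∀ y ∈ C, y ∉ Set.uIoo p q) {L : ℤ → Bool}
    (hLq : L q = !L p) (hLσp : L (σ p) = !L p) (hLσq : L (σ q) = !L q) :
    anticlockwiseArcs C σ L =
      anticlockwiseArcs ((C.erase p).erase q) (joinArcs σ p q) L + if L p then 1 else 0 := by
  have hσq : σ q ≠ p := fun e => hσp ((h.apply_eq_comm hq hp).1 e)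
  have hσpq := h.apply_ne_apply hp hq hpq.ne
  have hσpC : σ p ∈ (C.erase p).erase q := by simp [hσp, h.apply_ne p hp, h.map_mem p hp]
  have hσqC : σ q ∈ (C.erase p).erase q := by simp [hσq, h.apply_ne q hq, h.map_mem q hq]
  have hcross := h.noncrossing p hp q hq hpq.ne' hσp.symm
  have hσp_ne := h.apply_ne p hp
  have hσq_ne := h.apply_ne q hq
  have hσp_out := hadj (σ p) (h.map_mem p hp)
  have hσq_out := hadj (σ q) (h.map_mem q hq)
  have hrest : ∑ x ∈ (((C.erase p).erase q).erase (σ p)).erase (σ q),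
        (if x < σ x ∧ L x = false then 1 else 0) =
      ∑ x ∈ (((C.erase p).erase q).erase (σ p)).erase (σ q),
        (if x < joinArcs σ p q x ∧ L x = false then 1 else 0) :=
    sum_congr rfl fun x hx => by
      simp only [mem_erase] at hx
      rw [joinArcs_apply_of_ne hx.2.1 hx.1]
  simp only [anticlockwiseArcs, card_filter]
  rw [sum_eq_add_add_sum_erase_erase hp hq hpq.ne,
    sum_eq_add_add_sum_erase_erase hσpC hσqC hσpq, sum_eq_add_add_sum_erase_erase hσpC hσqC hσpq,
    hrest, joinArcs_apply_left, joinArcs_apply_right hσpq, h.apply_apply p hp, h.apply_apply q hq,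
    hLσq, hLq, hLσp]
  -- What is left is a check over the three non-crossing positions of the arcs at `p` and `q`.
  rw [Set.uIoo_of_lt hpq] at hσp_out hσq_out
  simp only [Set.uIoo, Set.mem_Ioo, min_def, max_def] at hcross hσp_out hσq_out
  split_ifs at hcross <;> cases L p <;>
    simp only [Bool.not_true, Bool.not_false, Bool.true_eq_false, Bool.false_eq_true, and_true,
      and_false, ↓reduceIte] <;> split_ifs <;> omega

end IsNoncrossingPairing

/-- An oriented circle with vertex set `C`, cups `{x, α x}` and caps `{x, β x}`; `L x` records
whether `x` is labelled `∧`. -/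
structure IsOrientedCircle (C : Finset ℤ) (α β : ℤ → ℤ) (L : ℤ → Bool) : Prop where
  cups : IsNoncrossingPairing C α
  caps : IsNoncrossingPairing C β
  label_cup : ∀ x ∈ C, L (α x) = !L x
  label_cap : ∀ x ∈ C, L (β x) = !L x
  connected : ∀ S ⊆ C, S.Nonempty → (∀ x ∈ S, α x ∈ S ∧ β x ∈ S) → S = C

namespace IsOrientedCircle

variable {C : Finset ℤ} {α β : ℤ → ℤ} {L : ℤ → Bool}

lemma contract (h : IsOrientedCircle C α β L) {p : ℤ} (hp : p ∈ C) (hβp : β p ≠ α p)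
    (hadj : ∀ y ∈ C, y ∉ Set.uIoo p (α p)) :
    IsOrientedCircle ((C.erase p).erase (α p)) α (joinArcs β p (α p)) L := by
  set q := α p
  have hq : q ∈ C := h.cups.map_mem p hp
  have hpq : p ≠ q := (h.cups.apply_ne p hp).symm
  have hβpq := h.caps.apply_ne_apply hp hq hpq
  have mem : ∀ {x}, x ∈ (C.erase p).erase q → x ≠ q ∧ x ≠ p ∧ x ∈ C := by simp
  refine ⟨h.cups.erase_arc hp, h.caps.join hp hq hpq hβp hadj,
    fun x hx => h.label_cup x (mem hx).2.2, fun x hx => ?_, fun S hS hSne hSclosed => ?_⟩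
  · by_cases hxp : x = β p
    · rw [hxp, joinArcs_apply_left, h.label_cap q hq, h.label_cap p hp, h.label_cup p hp,
        Bool.not_not]
    by_cases hxq : x = β q
    · rw [hxq, joinArcs_apply_right hβpq, h.label_cap q hq, h.label_cap p hp, h.label_cup p hp,
        Bool.not_not]
    rw [joinArcs_apply_of_ne hxp hxq]
    exact h.label_cap x (mem hx).2.2
  have hSC : S ⊆ C := fun x hx => (mem (hS hx)).2.2
  have hβ_of_ne : ∀ x ∈ S, x ≠ β p → x ≠ β q → β x ∈ S := fun x hx hxp hxq => by
    simpa [joinArcs_apply_of_ne hxp hxq] using (hSclosed x hx).2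
  have hβpS : β p ∈ S := by
    by_contra hβpS
    have hβqS : β q ∉ S := fun hβqS => hβpS (by
      simpa [joinArcs_apply_right hβpq] using (hSclosed _ hβqS).2)
    have hS_eq := h.connected S hSC hSne fun x hx => ⟨(hSclosed x hx).1,
      hβ_of_ne x hx (ne_of_mem_of_not_mem hx hβpS) (ne_of_mem_of_not_mem hx hβqS)⟩
    exact (mem (hS (hS_eq ▸ hp))).2.1 rfl
  -- Adding back the contracted path `β p, p, q, β q` gives a closed subset of `C`.
  have hT := h.connected (insert p (insert q S)) (by simp [insert_subset_iff, hp, hq, hSC])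
    (insert_nonempty _ _) fun x hx => by
      simp only [mem_insert] at hx ⊢
      rcases hx with rfl | rfl | hx
      · exact ⟨Or.inr (Or.inl rfl), Or.inr (Or.inr hβpS)⟩
      · refine ⟨Or.inl (h.cups.apply_apply p hp), Or.inr (Or.inr ?_)⟩
        simpa [joinArcs_apply_left] using (hSclosed _ hβpS).2
      refine ⟨Or.inr (Or.inr (hSclosed x hx).1), ?_⟩
      by_cases hxp : x = β p
      · exact Or.inl (by rw [hxp, h.caps.apply_apply p hp])
      by_cases hxq : x = β q
      · exact Or.inr (Or.inl (by rw [hxq, h.caps.apply_apply q hq]))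
      exact Or.inr (Or.inr (hβ_of_ne x hx hxp hxq))
  refine Subset.antisymm hS fun y hy => ?_
  obtain ⟨hyq, hyp, hyC⟩ := mem hy
  rw [← hT] at hyC
  simpa [hyp, hyq] using hyC

lemma eq_pair_of_cap_eq_cup (h : IsOrientedCircle C α β L) {p : ℤ} (hp : p ∈ C)
    (hβp : β p = α p) : C = {p, α p} := by
  have hβαp : β (α p) = p := by rw [← hβp, h.caps.apply_apply p hp]
  refine (h.connected {p, α p} (by simp [insert_subset_iff, hp, h.cups.map_mem p hp])
    (insert_nonempty _ _) fun x hx => ?_).symm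
  simp only [mem_insert, mem_singleton] at hx
  rcases hx with rfl | rfl <;> simp [hβp, hβαp, h.cups.apply_apply _ hp]

lemma clockwiseArcs_sub_anticlockwiseArcs_of_pair (h : IsOrientedCircle C α β L) {v : ℤ}
    (hv : v ∈ C) (hmin : ∀ x ∈ C, v ≤ x) (hC : C = {v, α v}) :
    (clockwiseArcs C α L : ℤ) - anticlockwiseArcs C β L = if L v then 1 else -1 := by
  have hαv : v < α v :=
    lt_of_le_of_ne (hmin _ (h.cups.map_mem v hv)) (h.cups.apply_ne v hv).symm
  have hβv : β v = α v := by
    have := h.caps.map_mem v hv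
    rw [hC, mem_insert, mem_singleton] at this
    exact this.resolve_left (h.caps.apply_ne v hv)
  have hβαv : β (α v) = v := by rw [← hβv, h.caps.apply_apply v hv]
  subst hC
  cases hLv : L v <;>
    simp [clockwiseArcs, anticlockwiseArcs, filter_insert, filter_singleton, hαv, hαv.not_gt,
      hβv, hβαv, h.cups.apply_apply v hv, h.label_cup v hv, hLv]

theorem clockwiseArcs_sub_anticlockwiseArcs (h : IsOrientedCircle C α β L) {v : ℤ} (hv : v ∈ C)
    (hmin : ∀ x ∈ C, v ≤ x) :
    (clockwiseArcs C α L : ℤ) - anticlockwiseArcs C β L = if L v then 1 else -1 := by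
  induction C using Finset.strongInduction generalizing β with
  | H C ih =>
  by_cases hpair : ∀ x ∈ C, x < α x → x = v
  · exact h.clockwiseArcs_sub_anticlockwiseArcs_of_pair hv hmin
      (h.cups.eq_pair_of_forall_lt_apply hv hpair)
  push Not at hpair
  obtain ⟨p, hpS, hpmin⟩ := exists_min_image {x ∈ C | x < α x ∧ x ≠ v} (fun x => α x - x)
    (by simpa [Finset.Nonempty] using hpair)
  obtain ⟨hp, hpα, hpv⟩ := mem_filter.1 hpS
  have hvp : v < p := lt_of_le_of_ne (hmin p hp) hpv.symm
  have hadj := h.cups.notMem_uIoo_of_innermost hp hpα fun x hx hpx hxα =>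
    hpmin x (mem_filter.2 ⟨hx, hxα, by omega⟩)
  have hβp : β p ≠ α p := fun hβp => by
    have := h.eq_pair_of_cap_eq_cup hp hβp ▸ hv
    simp only [mem_insert, mem_singleton] at this
    omega
  have hq := h.cups.map_mem p hp
  have hsmaller := ih _ ((erase_ssubset (mem_erase.2 ⟨hpα.ne', hq⟩)).trans (erase_ssubset hp))
    (h.contract hp hβp hadj) (by simp [hv, hpv.symm, (hvp.trans hpα).ne])
    fun x hx => hmin x (mem_of_mem_erase (mem_of_mem_erase hx))
  rw [h.cups.clockwiseArcs_erase_arc hp hpα, h.caps.anticlockwiseArcs_join hp hq hpα hβp hadj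
    (h.label_cup p hp) (h.label_cap p hp) (h.label_cap _ hq)]
  push_cast
  linarith

end IsOrientedCircle

namespace ArcDiagram

variable (c : ArcDiagram)

lemma eq_of_mem_cups {x y z : ℤ} (hy : (x, y) ∈ c.cups ∨ (y, x) ∈ c.cups)
    (hz : (x, z) ∈ c.cups ∨ (z, x) ∈ c.cups) : y = z := by
  have same_cup : ∀ {P Q : ℤ × ℤ}, P ∈ c.cups → Q ∈ c.cups →
      (P.1 = Q.1 ∨ P.1 = Q.2 ∨ P.2 = Q.1 ∨ P.2 = Q.2) → P = Q := fun hP hQ hPQ => by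
    by_contra hne
    have := c.cups_disjoint _ hP _ hQ hne
    tauto
  rcases hy with hy | hy <;> rcases hz with hz | hz <;>
    have := same_cup hy hz (by simp) <;> have := c.cups_lt _ hy <;>
    simp only [Prod.mk.injEq] at * <;> omega

noncomputable def partner (x : ℤ) : ℤ :=
  if h : ∃ y, (x, y) ∈ c.cups ∨ (y, x) ∈ c.cups then h.choose else x

variable {c}

lemma partner_eq {x y : ℤ} (h : (x, y) ∈ c.cups ∨ (y, x) ∈ c.cups) : c.partner x = y := by
  have h' : ∃ y, (x, y) ∈ c.cups ∨ (y, x) ∈ c.cups := ⟨y, h⟩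
  rw [partner, dif_pos h']
  exact c.eq_of_mem_cups h'.choose_spec h

lemma mem_cups_of_lt_partner {x : ℤ} (h : x < c.partner x) : (x, c.partner x) ∈ c.cups := by
  by_cases h' : ∃ y, (x, y) ∈ c.cups ∨ (y, x) ∈ c.cups
  · obtain ⟨y, hy⟩ := h'
    rw [partner_eq hy] at h ⊢
    exact hy.resolve_right fun hyx => (c.cups_lt _ hyx).not_gt h
  · rw [partner, dif_neg h'] at h
    exact absurd h (lt_irrefl x)

variable (c)

lemma ncard_cups_eq {C : Set ℤ} (hC : C.Finite) (P : ℤ → Prop) :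
    {p ∈ c.cups | p.1 ∈ C ∧ P p.1}.ncard = #{x ∈ hC.toFinset | x < c.partner x ∧ P x} := by
  rw [← Set.ncard_coe_finset]
  refine Set.ncard_congr (fun p _ => p.1) (fun p ⟨hp, hpC, hP⟩ => ?_) (fun p q hp hq hpq => ?_)
    fun x hx => ?_
  · simpa [hpC, hP, partner_eq (Or.inl hp)] using c.cups_lt p hp
  · have hq' : (p.1, q.2) ∈ c.cups := by rw [hpq]; exact hq.1
    exact Prod.ext hpq (c.eq_of_mem_cups (Or.inl hp.1) (Or.inl hq'))
  · simp only [coe_filter, Set.Finite.mem_toFinset] at hx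
    obtain ⟨hxC, hx, hP⟩ := hx
    exact ⟨(x, c.partner x), ⟨mem_cups_of_lt_partner hx, hxC, hP⟩, rfl⟩

lemma mem_uIoo_iff_of_mem_cups {P Q : ℤ × ℤ} (hP : P ∈ c.cups) (hQ : Q ∈ c.cups)
    (hPQ : P ≠ Q) : Q.1 ∈ Set.uIoo P.1 P.2 ↔ Q.2 ∈ Set.uIoo P.1 P.2 := by
  have := c.cups_noncrossing P hP Q hQ
  have := c.cups_noncrossing Q hQ P hP
  have := c.cups_disjoint P hP Q hQ hPQ
  have := c.cups_lt Q hQ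
  rw [Set.uIoo_of_lt (c.cups_lt P hP), Set.mem_Ioo, Set.mem_Ioo]
  omega

lemma isNoncrossingPairing {C : Finset ℤ}
    (hC : ∀ x ∈ C, ∃ y ∈ C, (x, y) ∈ c.cups ∨ (y, x) ∈ c.cups) :
    IsNoncrossingPairing C c.partner := by
  refine ⟨fun x hx => ?_, fun x hx => ?_, fun x hx => ?_, fun x hx y hy hyx hyx' => ?_⟩
  all_goals obtain ⟨x', hx'C, hxx'⟩ := hC x hx
  · rwa [partner_eq hxx']
  · rw [partner_eq hxx']
    rcases hxx' with h | h <;> have := c.cups_lt _ h <;> simp only at this <;> omega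
  · rw [partner_eq hxx', partner_eq hxx'.symm]
  obtain ⟨y', -, hyy'⟩ := hC y hy
  rw [partner_eq hxx'] at hyx' ⊢
  rw [partner_eq hyy']
  rcases hxx' with hP | hP <;> rcases hyy' with hQ | hQ
  · exact c.mem_uIoo_iff_of_mem_cups hP hQ (by simp [Prod.ext_iff]; omega)
  · exact (c.mem_uIoo_iff_of_mem_cups hP hQ (by simp [Prod.ext_iff]; omega)).symm
  · rw [Set.uIoo_comm]
    exact c.mem_uIoo_iff_of_mem_cups hP hQ (by simp [Prod.ext_iff]; omega)
  · rw [Set.uIoo_comm]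
    exact (c.mem_uIoo_iff_of_mem_cups hP hQ (by simp [Prod.ext_iff]; omega)).symm

end ArcDiagram

lemma OrientedCup.label_partner {c : ArcDiagram} {w : Weight} (h : OrientedCup c w) {x y : ℤ}
    (hxy : (x, y) ∈ c.cups ∨ (y, x) ∈ c.cups) :
    decide (w.label (c.partner x) = some Label.up) = !decide (w.label x = some Label.up) := by
  rw [ArcDiagram.partner_eq hxy]
  rcases hxy with hxy | hxy <;> rcases h.2.2.1 _ hxy with ⟨h1, h2⟩ | ⟨h1, h2⟩ <;> simp [h1, h2]

lemma arcAdj_symm {a b : ArcDiagram} {i j : ℤ} (h : arcAdj a b i j) : arcAdj a b j i := by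
  unfold arcAdj at *
  tauto

lemma reaches_symm {a b : ArcDiagram} {i j : ℤ} (h : reaches a b i j) : reaches a b j i := by
  induction h with
  | refl => exact Relation.ReflTransGen.refl
  | tail _ hjk ih => exact Relation.ReflTransGen.head (arcAdj_symm hjk) ih

namespace IsCircle

variable {a b : ArcDiagram} {C : Set ℤ}

lemma mem_of_arcAdj (hC : IsCircle a b C) {i j : ℤ} (hi : i ∈ C) (hij : arcAdj a b i j) :
    j ∈ C := by
  obtain ⟨⟨v, -, hv⟩, -⟩ := hC
  rw [hv] at hi ⊢
  exact hi.tail hij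

lemma exists_cup (hC : IsCircle a b C) {i : ℤ} (hi : i ∈ C) :
    ∃ j ∈ C, (i, j) ∈ a.cups ∨ (j, i) ∈ a.cups := by
  obtain ⟨j, hj⟩ := (hC.2 i hi).1
  exact ⟨j, hC.mem_of_arcAdj hi (by unfold arcAdj; tauto), hj⟩

lemma exists_cap (hC : IsCircle a b C) {i : ℤ} (hi : i ∈ C) :
    ∃ j ∈ C, (i, j) ∈ b.cups ∨ (j, i) ∈ b.cups := by
  obtain ⟨j, hj⟩ := (hC.2 i hi).2
  exact ⟨j, hC.mem_of_arcAdj hi (by unfold arcAdj; tauto), hj⟩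

lemma finite (hC : IsCircle a b C) : C.Finite := by
  refine ((a.cups_finite.image Prod.fst).union (a.cups_finite.image Prod.snd)).subset
    fun i hi => ?_
  obtain ⟨j, -, hj | hj⟩ := hC.exists_cup hi
  exacts [Or.inl ⟨_, hj, rfl⟩, Or.inr ⟨_, hj, rfl⟩]

lemma eq_of_closed (hC : IsCircle a b C) {S : Set ℤ} (hSC : S ⊆ C) (hS : S.Nonempty)
    (hclosed : ∀ x ∈ S, a.partner x ∈ S ∧ b.partner x ∈ S) : S = C := by
  obtain ⟨⟨v, -, hv⟩, -⟩ := hC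
  obtain ⟨s, hs⟩ := hS
  refine subset_antisymm hSC fun j hj => ?_
  have hsj : reaches a b s j := (reaches_symm ((hv s).1 (hSC hs))).trans ((hv j).1 hj)
  clear hj
  induction hsj with
  | refl => exact hs
  | @tail k l _ hkl hk =>
    rcases hkl with h | h | h | h
    · rw [← ArcDiagram.partner_eq (Or.inl h)]; exact (hclosed k hk).1
    · rw [← ArcDiagram.partner_eq (Or.inr h)]; exact (hclosed k hk).1
    · rw [← ArcDiagram.partner_eq (Or.inl h)]; exact (hclosed k hk).2
    · rw [← ArcDiagram.partner_eq (Or.inr h)]; exact (hclosed k hk).2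

theorem isOrientedCircle (hC : IsCircle a b C) {w : Weight} (ha : OrientedCup a w)
    (hb : OrientedCap w b) :
    IsOrientedCircle hC.finite.toFinset a.partner b.partner
      fun x => decide (w.label x = some Label.up) := by
  have mem : ∀ {x}, x ∈ hC.finite.toFinset ↔ x ∈ C := hC.finite.mem_toFinset
  refine ⟨a.isNoncrossingPairing fun x hx => ?_, b.isNoncrossingPairing fun x hx => ?_,
    fun x hx => ?_, fun x hx => ?_, fun S hSC hS hclosed => ?_⟩
  · obtain ⟨y, hy, hxy⟩ := hC.exists_cup (mem.1 hx)
    exact ⟨y, mem.2 hy, hxy⟩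
  · obtain ⟨y, hy, hxy⟩ := hC.exists_cap (mem.1 hx)
    exact ⟨y, mem.2 hy, hxy⟩
  · obtain ⟨y, -, hxy⟩ := hC.exists_cup (mem.1 hx)
    exact ha.label_partner hxy
  · obtain ⟨y, -, hxy⟩ := hC.exists_cap (mem.1 hx)
    exact OrientedCup.label_partner hb hxy
  · have := hC.eq_of_closed (S := S) (fun x hx => mem.1 (hSC hx)) hS hclosed
    rw [← Finset.coe_inj, this, hC.finite.coe_toFinset]

end IsCircle

/-- In any oriented circle diagram, the degree of an anticlockwise circle
(its total number of clockwise cups and caps) is one less than the total number of caps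
it contains, and the degree of a clockwise circle is one more than the total number of
caps it contains. -/
theorem statement_0 (a : ArcDiagram) (w : Weight) (b : ArcDiagram)
    (ha : OrientedCup a w) (hb : OrientedCap w b)
    (C : Set ℤ) (hC : IsCircle a b C)
    (v : ℤ) (hv : v ∈ C) (hleft : ∀ j ∈ C, v ≤ j) :
    (w.label v = some Label.down →
      {p ∈ a.cups | p.1 ∈ C ∧ w.label p.1 = some Label.up}.ncard +
        {p ∈ b.cups | p.1 ∈ C ∧ w.label p.1 = some Label.up}.ncard + 1 =
        {p ∈ b.cups | p.1 ∈ C}.ncard) ∧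
    (w.label v = some Label.up →
      {p ∈ a.cups | p.1 ∈ C ∧ w.label p.1 = some Label.up}.ncard +
        {p ∈ b.cups | p.1 ∈ C ∧ w.label p.1 = some Label.up}.ncard =
        {p ∈ b.cups | p.1 ∈ C}.ncard + 1) := by
  have hfin := hC.finite
  set L : ℤ → Bool := fun x => decide (w.label x = some Label.up)
  have key : (clockwiseArcs hfin.toFinset a.partner L : ℤ) -
      anticlockwiseArcs hfin.toFinset b.partner L = if L v then 1 else -1 :=
    (hC.isOrientedCircle ha hb).clockwiseArcs_sub_anticlockwiseArcs
      (hfin.mem_toFinset.2 hv) fun x hx => hleft x (hfin.mem_toFinset.1 hx)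
  have hclockwise : ∀ c : ArcDiagram,
      {p ∈ c.cups | p.1 ∈ C ∧ w.label p.1 = some Label.up}.ncard =
        clockwiseArcs hfin.toFinset c.partner L := fun c => by
    rw [c.ncard_cups_eq hfin (w.label · = some Label.up), clockwiseArcs]
    congr 1
    ext x
    simp [L]
  have hcaps : {p ∈ b.cups | p.1 ∈ C}.ncard =
      clockwiseArcs hfin.toFinset b.partner L + anticlockwiseArcs hfin.toFinset b.partner L := by
    simpa [clockwiseArcs_add_anticlockwiseArcs] using b.ncard_cups_eq hfin fun _ => True
  rw [hclockwise, hclockwise, hcaps]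
  constructor <;> intro hlabel
  · rw [show L v = false by simp [L, hlabel], if_neg Bool.false_ne_true] at key
    omega
  · rw [show L v = true by simp [L, hlabel], if_pos rfl] at key
    omega

end BrundanStroppel
end

section
/- Let Λ be a block and λ ∈ Λ. The set of weights μ with μ ⊂ λ is finite if and only if def(Λ) < ∞, where def(Λ) := sup{def(μ) : μ ∈ Λ}. -/
/-!
Common combinatorial framework for Brundan–Stroppel, "Highest weight categories arising
from Khovanov's diagram algebra I: cellularity": weights, blocks, the Bruhat order,
cup/cap diagrams, oriented cup/cap/circle diagrams, degrees, and the abstract properties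
of the diagrammatically defined multiplications.
-/

namespace BrundanStroppel

open scoped Classical

/-!
Every cup of `μ̲` joins a `∨` to a `∧`, so `def(μ)` is at most the number of `∨`'s and at most the
number of `∧`'s of `μ`, and these numbers are constant on a block. Both sides of the equivalence
therefore amount to `λ` having finitely many `∨`'s or finitely many `∧`'s.

If `λ` has infinitely many of both, its `∨`'s are unbounded above and its `∧`'s unbounded below.
Moving the threshold between the `∧`-rays and the `∨`-rays of `λ̲` gives infinitely many `μ ⊂ λ`,
and repeatedly joining two consecutive `∨`-rays far to the right by a cup gives weights of the
block with arbitrarily large defect.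

If `λ` has finitely many `∧`'s, say, and `μ ⊂ λ`, then `μ` and `λ` have equally many `∧`-rays on
`μ̲`, so they agree off the cups of `μ̲`; each of these cups contains a `∧` of `λ` and spans at
most twice as many labels `∨`, `∧` as `λ` has `∧`'s. Hence `μ` is determined by its labels on a
finite set that depends only on `λ`.
-/

theorem nonempty_equiv_of_infinite {α : Type*} [Countable α] {s t : Set α} (hs : s.Infinite)
    (ht : t.Infinite) :
    Nonempty (s ≃ t) := by
  have := hs.to_subtype
  have := ht.to_subtype
  exact Cardinal.eq.1 ((Cardinal.mk_eq_aleph0 s).trans (Cardinal.mk_eq_aleph0 t).symm)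

theorem infinite_inter_Ici_of_not_bddAbove {α : Type*} [LinearOrder α] {s : Set α}
    (hs : ¬BddAbove s) (t : α) : (s ∩ Set.Ici t).Infinite := by
  have : Nonempty α := ⟨t⟩
  refine Set.infinite_of_forall_exists_gt fun a => ?_
  obtain ⟨b, hb, hab⟩ := not_bddAbove_iff.1 hs (max a t)
  exact ⟨b, ⟨hb, (le_max_right a t).trans hab.le⟩, (le_max_left a t).trans_lt hab⟩

theorem infinite_inter_Iio_of_not_bddBelow {α : Type*} [LinearOrder α] {s : Set α}
    (hs : ¬BddBelow s) (t : α) : (s ∩ Set.Iio t).Infinite := by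
  have : Nonempty α := ⟨t⟩
  refine Set.infinite_of_forall_exists_lt fun a => ?_
  obtain ⟨b, hb, hab⟩ := not_bddBelow_iff.1 hs (min a t)
  exact ⟨b, ⟨hb, hab.trans_le (min_le_right a t)⟩, hab.trans_le (min_le_left a t)⟩

theorem eq_of_subset_or_subset_of_encard_eq {α : Type*} {A B R : Set α} (hA : A ⊆ R)
    (hB : B ⊆ R) (hAB : A ⊆ B ∨ B ⊆ A) (h : A.encard = B.encard)
    (h' : (R \ A).encard = (R \ B).encard) (hfin : A.Finite ∨ (R \ A).Finite) : A = B := by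
  wlog hsub : A ⊆ B generalizing A B
  · refine (this hB hA hAB.symm h.symm h'.symm ?_ (hAB.resolve_left hsub)).symm
    rwa [← Set.finite_iff_finite_of_encard_eq_encard h,
      ← Set.finite_iff_finite_of_encard_eq_encard h']
  rcases hfin with hfin | hfin
  · exact hfin.eq_of_subset_of_encard_le hsub h.ge
  · have hdiff : R \ B ⊆ R \ A := Set.sdiff_subset_sdiff_right hsub
    have := (hfin.subset hdiff).eq_of_subset_of_encard_le hdiff h'.le
    rw [← Set.sdiff_sdiff_cancel_left hA, ← Set.sdiff_sdiff_cancel_left hB, this]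

def orderBall {α : Type*} [LinearOrder α] (P : Set α) (x : α) (m : ℕ) : Set α :=
  {y ∈ P | (P ∩ Set.uIcc x y).encard ≤ m}

theorem finite_orderBall {α : Type*} [LinearOrder α] (P : Set α) (x : α) (m : ℕ) :
    (orderBall P x m).Finite := by
  set T := orderBall P x m
  have hside : ∀ S ⊆ T, (∀ s ⊆ S, s.Finite → s.Nonempty → ∃ y ∈ s, s ⊆ Set.uIcc x y) →
      S.Finite := by
    intro S hST hS
    by_contra hinf
    obtain ⟨s, hsS, hsfin, hscard⟩ := Set.Infinite.exists_subset_ncard_eq hinf (m + 1)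
    obtain ⟨y, hys, hsy⟩ := hS s hsS hsfin (Set.nonempty_of_ncard_ne_zero (by omega))
    have hle : s.encard ≤ m :=
      (Set.encard_le_encard (show s ⊆ P ∩ Set.uIcc x y from
        fun z hz => ⟨(hST (hsS hz)).1, hsy hz⟩)).trans (hST (hsS hys)).2
    rw [← hsfin.cast_ncard_eq, hscard] at hle
    norm_cast at hle
    omega
  have hright : (T ∩ Set.Ici x).Finite := hside _ Set.inter_subset_left fun s hs hfin hne => by
    obtain ⟨y, hys, hy⟩ := Set.exists_max_image s id hfin hne
    exact ⟨y, hys, fun z hz => Set.mem_uIcc.2 (Or.inl ⟨(hs hz).2, hy z hz⟩)⟩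
  have hleft : (T ∩ Set.Iic x).Finite := hside _ Set.inter_subset_left fun s hs hfin hne => by
    obtain ⟨y, hys, hy⟩ := Set.exists_min_image s id hfin hne
    exact ⟨y, hys, fun z hz => Set.mem_uIcc.2 (Or.inr ⟨hy z hz, (hs hz).2⟩)⟩
  refine (hright.union hleft).subset fun y hy => ?_
  rcases le_total x y with h | h
  exacts [Or.inl ⟨hy, h⟩, Or.inr ⟨hy, h⟩]

namespace Weight

def downs (w : Weight) : Set ℤ := {i | w.label i = some Label.down}

def ups (w : Weight) : Set ℤ := {i | w.label i = some Label.up}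

def arrows (w : Weight) : Set ℤ := w.downs ∪ w.ups

variable {v w : Weight} {k : ℤ}

@[simp] theorem mem_downs : k ∈ w.downs ↔ w.label k = some Label.down := Iff.rfl

@[simp] theorem mem_ups : k ∈ w.ups ↔ w.label k = some Label.up := Iff.rfl

@[simp] theorem mem_arrows :
    k ∈ w.arrows ↔ w.label k = some Label.down ∨ w.label k = some Label.up := Iff.rfl

theorem ext_label (h : v.label = w.label) : v = w := by
  cases v; cases w; simpa using h

theorem mem_support_of_mem_arrows (hk : k ∈ w.arrows) : k ∈ w.support := by
  rcases hk with hk | hk <;> simp [support, hk.out]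

theorem not_bddAbove_downs (hd : w.downs.Infinite) (hu : w.ups.Infinite) :
    ¬BddAbove w.downs := by
  obtain ⟨S, hS⟩ := w.tail
  obtain ⟨u, hu, huS⟩ := (hu.sdiff S.finite_toSet).nonempty
  rintro ⟨M, hM⟩
  refine (hd.sdiff S.finite_toSet) ((Set.finite_Icc u M).subset fun d hd' => ⟨?_, hM hd'.1⟩)
  exact not_lt.1 fun hdu => hS d u hdu hd'.2 huS ⟨hd'.1, hu⟩

theorem not_bddBelow_ups (hd : w.downs.Infinite) (hu : w.ups.Infinite) :
    ¬BddBelow w.ups := by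
  obtain ⟨S, hS⟩ := w.tail
  obtain ⟨d, hd, hdS⟩ := (hd.sdiff S.finite_toSet).nonempty
  rintro ⟨M, hM⟩
  refine (hu.sdiff S.finite_toSet) ((Set.finite_Icc M d).subset fun u hu' => ⟨hM hu'.1, ?_⟩)
  exact not_lt.1 fun hdu => hS d u hdu hdS hu'.2 ⟨hd, hu'.1⟩

def update (w : Weight) (k : ℤ) (l : Label) (hk : k ∈ w.support) : Weight where
  label := Function.update w.label k (some l)
  consecutive a b c hab hbc ha hc := by
    have hsome : ∀ i, (Function.update w.label k (some l) i).isSome = (w.label i).isSome := by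
      intro i
      by_cases hik : i = k
      · subst hik; simpa using hk.symm
      · simp [hik]
    rw [hsome] at ha hc ⊢
    exact w.consecutive a b c hab hbc ha hc
  tail := by
    obtain ⟨S, hS⟩ := w.tail
    refine ⟨insert k S, fun i j hij hi hj => ?_⟩
    simp only [Finset.mem_insert, not_or] at hi hj
    simpa [hi.1, hj.1] using hS i j hij hi.2 hj.2

theorem update_label_self (w : Weight) (k : ℤ) (l : Label) (hk : k ∈ w.support) :
    (w.update k l hk).label k = some l := by
  simp [update]

theorem update_label_of_ne (w : Weight) {k i : ℤ} (l : Label) (hk : k ∈ w.support)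
    (hi : i ≠ k) : (w.update k l hk).label i = w.label i := by
  simp [update, hi]

theorem support_update (w : Weight) (k : ℤ) (l : Label) (hk : k ∈ w.support) :
    (w.update k l hk).support = w.support := by
  ext i
  by_cases hi : i = k
  · subst hi; simpa [support, update_label_self] using hk.symm
  · simp [support, update_label_of_ne w l hk hi]

end Weight

namespace Sim

variable {u v w : Weight}

theorem refl (v : Weight) : Sim v v :=
  ⟨fun _ => Iff.rfl, fun _ => Iff.rfl, fun _ => Iff.rfl, ⟨Equiv.refl _⟩, ⟨Equiv.refl _⟩⟩

theorem symm (h : Sim v w) : Sim w v := by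
  obtain ⟨h1, h2, h3, ⟨e4⟩, ⟨e5⟩⟩ := h
  exact ⟨fun i => (h1 i).symm, fun i => (h2 i).symm, fun i => (h3 i).symm, ⟨e4.symm⟩, ⟨e5.symm⟩⟩

theorem trans (h : Sim u v) (h' : Sim v w) : Sim u w := by
  obtain ⟨h1, h2, h3, ⟨e4⟩, ⟨e5⟩⟩ := h
  obtain ⟨h1', h2', h3', ⟨e4'⟩, ⟨e5'⟩⟩ := h'
  exact ⟨fun i => (h1 i).trans (h1' i), fun i => (h2 i).trans (h2' i),
    fun i => (h3 i).trans (h3' i), ⟨e4.trans e4'⟩, ⟨e5.trans e5'⟩⟩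

theorem encard_downs_eq (h : Sim v w) : v.downs.encard = w.downs.encard :=
  Set.encard_congr h.2.2.2.1.some

theorem encard_ups_eq (h : Sim v w) : v.ups.encard = w.ups.encard :=
  Set.encard_congr h.2.2.2.2.some

theorem label_eq_of_notMem_arrows (h : Sim v w) {k : ℤ} (hk : k ∉ v.arrows) :
    w.label k = v.label k := by
  rcases hv : v.label k with _ | l
  · simpa [hv] using h.1 k
  · cases l
    · exact (h.2.1 k).1 hv
    · exact (h.2.2.1 k).1 hv
    · simp [hv] at hk
    · simp [hv] at hk

theorem arrows_eq (h : Sim v w) : v.arrows = w.arrows := by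
  have key : ∀ {v w : Weight}, Sim v w → w.arrows ⊆ v.arrows := fun h k hk => by
    by_contra hv
    rw [Weight.mem_arrows, h.label_eq_of_notMem_arrows hv] at hk
    exact hv hk
  exact (key h.symm).antisymm (key h)

theorem eq_of_ups_eq (h : Sim v w) (hu : v.ups = w.ups) : v = w := by
  refine Weight.ext_label (funext fun k => ?_)
  by_cases hk : k ∈ v.arrows
  · have hk' : k ∈ w.arrows := h.arrows_eq ▸ hk
    by_cases hku : k ∈ v.ups
    · rw [Weight.mem_ups.1 hku, Weight.mem_ups.1 (hu ▸ hku : k ∈ w.ups)]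
    · have hku' : k ∉ w.ups := hu ▸ hku
      rw [(hk.resolve_right hku : k ∈ v.downs), (hk'.resolve_right hku' : k ∈ w.downs)]
  · exact (h.label_eq_of_notMem_arrows hk).symm

end Sim

theorem sim_of_infinite {v w : Weight} (hoff : ∀ k ∉ v.arrows, w.label k = v.label k)
    (harr : v.arrows ⊆ w.arrows) (hvd : v.downs.Infinite) (hwd : w.downs.Infinite)
    (hvu : v.ups.Infinite) (hwu : w.ups.Infinite) : Sim v w := by
  have hsame : ∀ k, (v.label k = w.label k) ∨ (k ∈ v.arrows ∧ k ∈ w.arrows) := fun k => by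
    by_cases hk : k ∈ v.arrows
    exacts [Or.inr ⟨hk, harr hk⟩, Or.inl (hoff k hk).symm]
  refine ⟨fun k => ?_, fun k => ?_, fun k => ?_, nonempty_equiv_of_infinite hvd hwd,
    nonempty_equiv_of_infinite hvu hwu⟩ <;>
  rcases hsame k with hk | ⟨hv | hv, hw | hw⟩ <;> simp_all

theorem IsBlock.mem_iff_sim {Λ : Set Weight} (hΛ : IsBlock Λ) {v w : Weight} (hv : v ∈ Λ) :
    w ∈ Λ ↔ Sim v w := by
  obtain ⟨u, rfl⟩ := hΛ
  exact ⟨fun hw => hv.out.symm.trans hw, fun hw => hv.out.trans hw⟩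

namespace ArcDiagram

def ends (c : ArcDiagram) : Set ℤ := Prod.fst '' c.cups ∪ Prod.snd '' c.cups

variable {c : ArcDiagram} {p q : ℤ × ℤ} {k : ℤ}

theorem mem_ends : k ∈ c.ends ↔ ∃ p ∈ c.cups, p.1 = k ∨ p.2 = k := by
  simp only [ends, Set.mem_union, Set.mem_image]
  constructor
  · rintro (⟨p, hp, rfl⟩ | ⟨p, hp, rfl⟩)
    exacts [⟨p, hp, Or.inl rfl⟩, ⟨p, hp, Or.inr rfl⟩]
  · rintro ⟨p, hp, rfl | rfl⟩
    exacts [Or.inl ⟨p, hp, rfl⟩, Or.inr ⟨p, hp, rfl⟩]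

theorem fst_mem_ends (hp : p ∈ c.cups) : p.1 ∈ c.ends := Or.inl ⟨p, hp, rfl⟩

theorem snd_mem_ends (hp : p ∈ c.cups) : p.2 ∈ c.ends := Or.inr ⟨p, hp, rfl⟩

theorem ends_finite (c : ArcDiagram) : c.ends.Finite :=
  (c.cups_finite.image _).union (c.cups_finite.image _)

theorem encard_ends_le (c : ArcDiagram) : c.ends.encard ≤ 2 * c.cups.encard :=
  (Set.encard_union_le _ _).trans <| by
    rw [two_mul]
    exact add_le_add (Set.encard_image_le _ _) (Set.encard_image_le _ _)

theorem notMem_ends_of_mem_rays (hk : k ∈ c.rays) : k ∉ c.ends := by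
  rw [mem_ends]
  rintro ⟨p, hp, h | h⟩
  exacts [(c.rays_cups_disjoint p hp k hk).1 h.symm, (c.rays_cups_disjoint p hp k hk).2 h.symm]

theorem notMem_rays_of_mem_Icc (hp : p ∈ c.cups) (hk : k ∈ Set.Icc p.1 p.2) : k ∉ c.rays :=
  fun hr => by
    obtain ⟨h1, h2⟩ := c.rays_cups_disjoint p hp k hr
    exact c.rays_cups_noncrossing p hp k hr ⟨lt_of_le_of_ne hk.1 h1.symm, lt_of_le_of_ne hk.2 h2⟩

theorem eq_of_mem_endpoints (hp : p ∈ c.cups) (hq : q ∈ c.cups) (hk : p.1 = k ∨ p.2 = k)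
    (hk' : q.1 = k ∨ q.2 = k) : p = q := by
  by_contra hpq
  obtain ⟨h11, h12, h21, h22⟩ := c.cups_disjoint p hp q hq hpq
  rcases hk with rfl | rfl <;> rcases hk' with h | h <;> simp_all

theorem encard_inter_ends {X : Set ℤ} (hX : ∀ p ∈ c.cups, p.1 ∈ X ↔ p.2 ∉ X) :
    (X ∩ c.ends).encard = c.cups.encard := by
  classical
  let f : ℤ × ℤ → ℤ := fun p => if p.1 ∈ X then p.1 else p.2
  have hf : ∀ p, p.1 = f p ∨ p.2 = f p := fun p => by
    by_cases h : p.1 ∈ X <;> simp [f, h]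
  have hinj : Set.InjOn f c.cups := fun p hp q hq hpq =>
    eq_of_mem_endpoints hp hq (hf p) (hpq ▸ hf q)
  have himage : f '' c.cups = X ∩ c.ends := by
    ext k
    simp only [Set.mem_image, Set.mem_inter_iff, mem_ends]
    constructor
    · rintro ⟨p, hp, rfl⟩
      refine ⟨?_, p, hp, hf p⟩
      by_cases h : p.1 ∈ X
      · simp [f, h]
      · simpa [f, h] using not_not.1 (mt (hX p hp).2 h)
    · rintro ⟨hkX, p, hp, rfl | rfl⟩
      · exact ⟨p, hp, by simp [f, hkX]⟩
      · exact ⟨p, hp, by simp [f, mt (hX p hp).1 (not_not.2 hkX)]⟩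
  rw [← himage, hinj.encard_image]

def addCup (c : ArcDiagram) {i j : ℤ} (hij : i < j) (hi : i ∈ c.support) (hj : j ∈ c.support)
    (hi' : i ∉ c.ends) (hj' : j ∉ c.ends)
    (hgap : ∀ k ∈ Set.Ioo i j, k ∉ c.rays ∧ k ∉ c.ends) : ArcDiagram where
  support := c.support
  consecutive := c.consecutive
  cups := insert (i, j) c.cups
  rays := c.rays \ {i, j}
  cups_finite := c.cups_finite.insert _
  cups_lt := by
    rintro p (rfl | hp)
    exacts [hij, c.cups_lt p hp]
  cups_subset := by
    rintro p (rfl | hp)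
    exacts [⟨hi, hj⟩, c.cups_subset p hp]
  rays_subset := Set.sdiff_subset.trans c.rays_subset
  cups_disjoint := by
    have hnew : ∀ q ∈ c.cups, i ≠ q.1 ∧ i ≠ q.2 ∧ j ≠ q.1 ∧ j ≠ q.2 := fun q hq =>
      ⟨fun h => hi' (h ▸ fst_mem_ends hq), fun h => hi' (h ▸ snd_mem_ends hq),
        fun h => hj' (h ▸ fst_mem_ends hq), fun h => hj' (h ▸ snd_mem_ends hq)⟩
    rintro p (rfl | hp) q (rfl | hq) hpq
    · exact absurd rfl hpq
    · exact hnew q hq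
    · obtain ⟨h1, h2, h3, h4⟩ := hnew p hp
      exact ⟨h1.symm, h3.symm, h2.symm, h4.symm⟩
    · exact c.cups_disjoint p hp q hq hpq
  rays_cups_disjoint := by
    rintro p (rfl | hp) r ⟨hr, hrij⟩
    · simp only [Set.mem_insert_iff, Set.mem_singleton_iff, not_or] at hrij
      exact ⟨hrij.1, hrij.2⟩
    · exact c.rays_cups_disjoint p hp r hr
  cups_noncrossing := by
    rintro p (rfl | hp) q (rfl | hq) h1 h2
    · exact absurd h1 (lt_irrefl _)
    · exact absurd (fst_mem_ends hq) (hgap q.1 ⟨h1, h2⟩).2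
    · rcases lt_trichotomy p.2 j with h | h | h
      · exact absurd (snd_mem_ends hp) (hgap p.2 ⟨h2, h⟩).2
      · exact absurd (h ▸ snd_mem_ends hp) hj'
      · exact h
    · exact c.cups_noncrossing p hp q hq h1 h2
  rays_cups_noncrossing := by
    rintro p (rfl | hp) r ⟨hr, -⟩
    · exact fun h => (hgap r h).1 hr
    · exact c.rays_cups_noncrossing p hp r hr

end ArcDiagram

namespace OrientedCup

variable {c : ArcDiagram} {v w : Weight} {p : ℤ × ℤ} {k r t : ℤ}

theorem arrows_eq (h : OrientedCup c w) : w.arrows = c.rays ∪ c.ends := by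
  ext k
  constructor
  · intro hk
    by_contra hnot
    simp only [Set.mem_union, not_or] at hnot
    have hfree : c.Free k := ⟨h.1 ▸ Weight.mem_support_of_mem_arrows hk, hnot.1, fun p hp =>
      ⟨fun e => hnot.2 (e ▸ ArcDiagram.fst_mem_ends hp),
        fun e => hnot.2 (e ▸ ArcDiagram.snd_mem_ends hp)⟩⟩
    rcases h.2.1 k hfree with h' | h' <;> rcases hk with hk | hk <;> simp_all
  · rintro (hr | he)
    · exact h.2.2.2.1 k hr
    · obtain ⟨p, hp, rfl | rfl⟩ := ArcDiagram.mem_ends.1 he <;>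
        rcases h.2.2.1 p hp with ⟨h1, h2⟩ | ⟨h1, h2⟩ <;> simp [h1, h2]

theorem notMem_rays_of_notMem_arrows (h : OrientedCup c w) (hk : k ∉ w.arrows) :
    k ∉ c.rays := fun hr => hk (h.arrows_eq ▸ Or.inl hr)

theorem notMem_ends_of_notMem_arrows (h : OrientedCup c w) (hk : k ∉ w.arrows) :
    k ∉ c.ends := fun he => hk (h.arrows_eq ▸ Or.inr he)

theorem fst_mem_ups_iff (h : OrientedCup c w) (hp : p ∈ c.cups) :
    p.1 ∈ w.ups ↔ p.2 ∉ w.ups := by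
  rcases h.2.2.1 p hp with ⟨h1, h2⟩ | ⟨h1, h2⟩ <;> simp [h1, h2]

theorem fst_mem_downs_iff (h : OrientedCup c w) (hp : p ∈ c.cups) :
    p.1 ∈ w.downs ↔ p.2 ∉ w.downs := by
  rcases h.2.2.1 p hp with ⟨h1, h2⟩ | ⟨h1, h2⟩ <;> simp [h1, h2]

theorem encard_eq_cups_add {X : Set ℤ} (h : OrientedCup c w) (hX : X ⊆ w.arrows)
    (hXc : ∀ p ∈ c.cups, p.1 ∈ X ↔ p.2 ∉ X) :
    X.encard = c.cups.encard + (X ∩ c.rays).encard := by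
  have hdisj : Disjoint (X ∩ c.ends) (X ∩ c.rays) := Set.disjoint_left.2 fun k hk hk' =>
    ArcDiagram.notMem_ends_of_mem_rays hk'.2 hk.2
  calc X.encard = ((X ∩ c.ends) ∪ (X ∩ c.rays)).encard := by
        rw [← Set.inter_union_distrib_left, Set.union_comm, ← h.arrows_eq,
          Set.inter_eq_left.2 hX]
    _ = c.cups.encard + (X ∩ c.rays).encard := by
        rw [Set.encard_union_eq hdisj, ArcDiagram.encard_inter_ends hXc]

theorem encard_ups (h : OrientedCup c w) :
    w.ups.encard = c.cups.encard + (w.ups ∩ c.rays).encard :=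
  h.encard_eq_cups_add Set.subset_union_right fun _ hp => h.fst_mem_ups_iff hp

theorem encard_downs (h : OrientedCup c w) :
    w.downs.encard = c.cups.encard + (w.downs ∩ c.rays).encard :=
  h.encard_eq_cups_add Set.subset_union_left fun _ hp => h.fst_mem_downs_iff hp

theorem encard_cups_le_ups (h : OrientedCup c w) : c.cups.encard ≤ w.ups.encard :=
  h.encard_ups ▸ le_self_add

theorem encard_cups_le_downs (h : OrientedCup c w) : c.cups.encard ≤ w.downs.encard :=
  h.encard_downs ▸ le_self_add

theorem le_of_mem_rays (h : OrientedCup c w) (hr : r ∈ c.rays) (ht : t ∈ c.rays)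
    (hrd : r ∈ w.downs) (htu : t ∈ w.ups) : t ≤ r :=
  not_lt.1 fun hrt => h.2.2.2.2 r hr t ht hrt ⟨hrd, htu⟩

theorem mem_downs_of_mem_rays (h : OrientedCup c w) (hr : r ∈ c.rays) (hu : r ∉ w.ups) :
    r ∈ w.downs :=
  (h.2.2.2.1 r hr).resolve_right hu

theorem rays_diff_ups (h : OrientedCup c w) :
    c.rays \ (w.ups ∩ c.rays) = w.downs ∩ c.rays := by
  ext r
  constructor
  · rintro ⟨hr, hnu⟩
    exact ⟨h.mem_downs_of_mem_rays hr fun hu => hnu ⟨hu, hr⟩, hr⟩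
  · rintro ⟨hd, hr⟩
    refine ⟨hr, fun hu => ?_⟩
    have := hu.1.out
    rw [hd.out] at this
    cases this

/-- On the rays the `∧`'s come before the `∨`'s. -/
theorem ups_inter_rays_subset_or (hv : OrientedCup c v) (hw : OrientedCup c w) :
    v.ups ∩ c.rays ⊆ w.ups ∩ c.rays ∨ w.ups ∩ c.rays ⊆ v.ups ∩ c.rays := by
  by_contra h
  simp only [not_or, Set.not_subset] at h
  obtain ⟨⟨a, ⟨hav, har⟩, haw⟩, ⟨b, ⟨hbw, hbr⟩, hbv⟩⟩ := h
  rcases lt_trichotomy a b with hab | rfl | hab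
  · have had := hw.mem_downs_of_mem_rays har fun hu => haw ⟨hu, har⟩
    exact hab.not_ge (hw.le_of_mem_rays har hbr had hbw)
  · exact haw ⟨hbw, hbr⟩
  · have hbd := hv.mem_downs_of_mem_rays hbr fun hu => hbv ⟨hu, hbr⟩
    exact hab.not_ge (hv.le_of_mem_rays hbr har hbd hav)

/-- Counting shows that `w` and `v` have equally many `∧`-rays and equally many `∨`-rays; as the
`∧`-rays form nested initial segments of the rays, finiteness forces them to coincide. -/
theorem label_eq_of_notMem_ends (hsim : Sim w v) (hw : OrientedCup c w) (hv : OrientedCup c v)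
    (hfin : v.ups.Finite ∨ v.downs.Finite) (hk : k ∉ c.ends) : w.label k = v.label k := by
  have hcancel : ∀ {a b : ℕ∞}, c.cups.encard + a = c.cups.encard + b → a = b :=
    fun hab => ENat.add_right_injective_of_ne_top (Set.encard_ne_top_iff.2 c.cups_finite) hab
  have hU : v.ups ∩ c.rays = w.ups ∩ c.rays := by
    refine eq_of_subset_or_subset_of_encard_eq Set.inter_subset_right Set.inter_subset_right
      (ups_inter_rays_subset_or hv hw) (hcancel ?_) ?_ ?_
    · rw [← hv.encard_ups, ← hw.encard_ups, hsim.encard_ups_eq]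
    · rw [hv.rays_diff_ups, hw.rays_diff_ups]
      exact hcancel (by rw [← hv.encard_downs, ← hw.encard_downs, hsim.encard_downs_eq])
    · rw [hv.rays_diff_ups]
      exact hfin.imp (·.subset Set.inter_subset_left) (·.subset Set.inter_subset_left)
  by_cases hr : k ∈ c.rays
  · by_cases hku : k ∈ v.ups
    · have hkw : k ∈ w.ups ∩ c.rays := hU ▸ ⟨hku, hr⟩
      rw [hkw.1.out, hku.out]
    · have hkw : k ∉ w.ups := fun h => hku (hU.symm ▸ Set.mem_inter h hr).1
      rw [(hw.mem_downs_of_mem_rays hr hkw).out, (hv.mem_downs_of_mem_rays hr hku).out]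
  · refine hsim.symm.label_eq_of_notMem_arrows ?_
    rw [hv.arrows_eq]
    exact fun h => h.elim hr hk

theorem ends_subset_biUnion_orderBall (hv : OrientedCup c v) {X : Set ℤ}
    (hX : ∀ p ∈ c.cups, p.1 ∈ X ↔ p.2 ∉ X) {n : ℕ} (hn : c.cups.encard ≤ n) :
    c.ends ⊆ ⋃ x ∈ X, orderBall v.arrows x (2 * n) := by
  intro e he
  obtain ⟨p, hp, hpe⟩ := ArcDiagram.mem_ends.1 he
  have hIcc : v.arrows ∩ Set.Icc p.1 p.2 ⊆ c.ends := fun k hk => by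
    have := hk.1
    rw [hv.arrows_eq] at this
    exact this.resolve_left (ArcDiagram.notMem_rays_of_mem_Icc hp hk.2)
  have hend : ∀ y, (p.1 = y ∨ p.2 = y) → y ∈ Set.Icc p.1 p.2 := by
    have := (c.cups_lt p hp).le
    rintro y (rfl | rfl) <;> simp [this]
  have hball : ∀ x, (p.1 = x ∨ p.2 = x) → e ∈ orderBall v.arrows x (2 * n) := fun x hx => by
    refine ⟨hv.arrows_eq ▸ Or.inr he, ?_⟩
    calc (v.arrows ∩ Set.uIcc x e).encard ≤ c.ends.encard := Set.encard_le_encard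
          ((Set.inter_subset_inter_right _ (Set.uIcc_subset_Icc (hend x hx) (hend e hpe))).trans
            hIcc)
      _ ≤ 2 * c.cups.encard := c.encard_ends_le
      _ ≤ ((2 * n : ℕ) : ℕ∞) := by push_cast; gcongr
  by_cases h1 : p.1 ∈ X
  · exact Set.mem_biUnion h1 (hball _ (Or.inl rfl))
  · exact Set.mem_biUnion (not_not.1 (mt (hX p hp).2 h1)) (hball _ (Or.inr rfl))

end OrientedCup

theorem IsUnderline.addCup {w w' : Weight} {c : ArcDiagram} (hc : IsUnderline w c) {i j : ℤ}
    (hij : i < j) (hi : i ∈ c.support) (hj : j ∈ c.support) (hi' : i ∉ c.ends)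
    (hj' : j ∉ c.ends) (hgap : ∀ k ∈ Set.Ioo i j, k ∉ c.rays ∧ k ∉ c.ends)
    (hoff : ∀ k, k ≠ i → k ≠ j → w'.label k = w.label k)
    (hwi : w'.label i = some Label.down) (hwj : w'.label j = some Label.up) :
    IsUnderline w' (c.addCup hij hi hj hi' hj' hgap) := by
  obtain ⟨⟨hsupp, hfree, hcups, hrays, hpairs⟩, hanti⟩ := hc
  have hoff_cup : ∀ p ∈ c.cups, w'.label p.1 = w.label p.1 ∧ w'.label p.2 = w.label p.2 :=
    fun p hp => ⟨hoff _ (fun e => hi' (e ▸ ArcDiagram.fst_mem_ends hp))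
        (fun e => hj' (e ▸ ArcDiagram.fst_mem_ends hp)),
      hoff _ (fun e => hi' (e ▸ ArcDiagram.snd_mem_ends hp))
        (fun e => hj' (e ▸ ArcDiagram.snd_mem_ends hp))⟩
  have hoff_ray : ∀ r ∈ c.rays \ {i, j}, w'.label r = w.label r := fun r hr => by
    simp only [Set.mem_sdiff, Set.mem_insert_iff, Set.mem_singleton_iff, not_or] at hr
    exact hoff r hr.2.1 hr.2.2
  refine ⟨⟨?_, ?_, ?_, ?_, ?_⟩, ?_⟩
  · show c.support = w'.support
    ext k
    rw [hsupp] at hi hj ⊢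
    by_cases hki : k = i
    · subst hki; simpa [Weight.support, hwi] using hi
    by_cases hkj : k = j
    · subst hkj; simpa [Weight.support, hwj] using hj
    simp [Weight.support, hoff k hki hkj]
  · rintro k ⟨hks, hkr, hkc⟩
    obtain ⟨hki, hkj⟩ := hkc (i, j) (Set.mem_insert _ _)
    rw [hoff k hki hkj]
    exact hfree k ⟨hks, fun hr => hkr ⟨hr, by simp [hki, hkj]⟩,
      fun p hp => hkc p (Set.mem_insert_of_mem _ hp)⟩
  · rintro p (rfl | hp)
    · exact Or.inl ⟨hwi, hwj⟩
    · rw [(hoff_cup p hp).1, (hoff_cup p hp).2]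
      exact hcups p hp
  · intro r hr
    rw [hoff_ray r hr]
    exact hrays r hr.1
  · intro r hr t ht hrt
    rw [hoff_ray r hr, hoff_ray t ht]
    exact hpairs r hr.1 t ht.1 hrt
  · rintro p (rfl | hp)
    · exact hwi
    · rw [(hoff_cup p hp).1]
      exact hanti p hp

namespace Weight

variable {w : Weight}

def upsAfterDown (w : Weight) : Set ℤ := {j ∈ w.ups | ∃ i ∈ w.downs, i < j}

def downsBeforeUp (w : Weight) : Set ℤ := {i ∈ w.downs | ∃ j ∈ w.ups, i < j}

/-- If some `∨` lies outside the exceptional set `S` of the tail condition, every `∧` preceded by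
a `∨` lies in `S` or between `S` and that `∨`; otherwise all `∨`'s lie in `S`. -/
theorem finite_upsAfterDown_or_finite_downsBeforeUp (w : Weight) :
    w.upsAfterDown.Finite ∨ w.downsBeforeUp.Finite := by
  obtain ⟨S, hS⟩ := w.tail
  by_cases hdS : w.downs ⊆ S
  · exact Or.inr (S.finite_toSet.subset fun i hi => hdS hi.1)
  obtain ⟨i₀, hi₀, hi₀S⟩ := Set.not_subset.1 hdS
  refine Or.inl ((S.finite_toSet.union (S.finite_toSet.biUnion fun s _ =>
    Set.finite_Icc s i₀)).subset ?_)
  rintro j ⟨hj, i, hi, hij⟩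
  by_cases hjS : j ∈ S
  · exact Or.inl hjS
  have hiS : i ∈ S := by_contra fun hiS => hS i j hij hiS hjS ⟨hi, hj⟩
  exact Or.inr (Set.mem_biUnion hiS ⟨hij.le, not_lt.1 fun h => hS i₀ j h hi₀S hjS ⟨hi₀, hj⟩⟩)

theorem exists_adjacent_inversion {i j : ℤ} (hij : i < j) (hi : i ∈ w.downs) (hj : j ∈ w.ups) :
    ∃ i₀ j₀, i₀ < j₀ ∧ i₀ ∈ w.downs ∧ j₀ ∈ w.ups ∧ ∀ k ∈ Set.Ioo i₀ j₀, k ∉ w.arrows := by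
  obtain ⟨i₀, ⟨hi₀j, hi₀⟩, hi₀max⟩ := Int.exists_greatest_of_bdd
    (P := fun x => x < j ∧ x ∈ w.downs) ⟨j, fun z hz => hz.1.le⟩ ⟨i, hij, hi⟩
  obtain ⟨j₀, ⟨hij₀, hj₀⟩, hj₀min⟩ := Int.exists_least_of_bdd
    (P := fun x => i₀ < x ∧ x ∈ w.ups) ⟨i₀, fun z hz => hz.1.le⟩ ⟨j, hi₀j, hj⟩
  have hj₀j : j₀ ≤ j := hj₀min j ⟨hi₀j, hj⟩
  refine ⟨i₀, j₀, hij₀, hi₀, hj₀, fun k hk hka => ?_⟩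
  rcases hka with hkd | hku
  · exact (hi₀max k ⟨hk.2.trans_le hj₀j, hkd⟩).not_gt hk.1
  · exact (hj₀min k ⟨hk.1, hku⟩).not_gt hk.2

def crossOut (w : Weight) {i j : ℤ} (hi : i ∈ w.support) (hj : j ∈ w.support) : Weight :=
  (w.update i Label.cross hi).update j Label.cross (by rwa [support_update])

theorem crossOut_label {i j : ℤ} (hi : i ∈ w.support) (hj : j ∈ w.support) (k : ℤ) :
    (w.crossOut hi hj).label k = if k = i ∨ k = j then some Label.cross else w.label k := by
  by_cases hkj : k = j
  · simp [crossOut, hkj, update_label_self]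
  rw [crossOut, update_label_of_ne _ _ _ hkj]
  by_cases hki : k = i
  · simp [hki, update_label_self]
  · simp [hki, hkj, update_label_of_ne _ _ _ hki]

theorem min_encard_crossOut_add_one_le {i j : ℤ} (hij : i < j) (hi : i ∈ w.downs)
    (hj : j ∈ w.ups) (hsi : i ∈ w.support) (hsj : j ∈ w.support) :
    min (w.crossOut hsi hsj).upsAfterDown.encard (w.crossOut hsi hsj).downsBeforeUp.encard + 1 ≤
      min w.upsAfterDown.encard w.downsBeforeUp.encard := by
  set w' := w.crossOut hsi hsj
  have hups : ∀ k ∈ w'.ups, k ∈ w.ups ∧ k ≠ j := fun k hk => by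
    have hk := hk.out
    rw [crossOut_label] at hk
    split_ifs at hk with h
    · simp at hk
    · exact ⟨hk, fun e => h (Or.inr e)⟩
  have hdowns : ∀ k ∈ w'.downs, k ∈ w.downs ∧ k ≠ i := fun k hk => by
    have hk := hk.out
    rw [crossOut_label] at hk
    split_ifs at hk with h
    · simp at hk
    · exact ⟨hk, fun e => h (Or.inl e)⟩
  have hA : w'.upsAfterDown ⊆ w.upsAfterDown \ {j} := fun k ⟨hk, l, hl, hlk⟩ =>
    ⟨⟨(hups k hk).1, l, (hdowns l hl).1, hlk⟩, (hups k hk).2⟩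
  have hB : w'.downsBeforeUp ⊆ w.downsBeforeUp \ {i} := fun k ⟨hk, l, hl, hkl⟩ =>
    ⟨⟨(hdowns k hk).1, l, (hups l hl).1, hkl⟩, (hdowns k hk).2⟩
  rw [← min_add_add_right]
  refine min_le_min ?_ ?_
  · rw [← Set.encard_sdiff_singleton_add_one (show j ∈ w.upsAfterDown from ⟨hj, i, hi, hij⟩)]
    gcongr
  · rw [← Set.encard_sdiff_singleton_add_one (show i ∈ w.downsBeforeUp from ⟨hi, j, hj, hij⟩)]
    gcongr

end Weight

theorem exists_underline_of_no_inversion {w : Weight}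
    (h : ∀ i j, i < j → ¬(w.label i = some Label.down ∧ w.label j = some Label.up)) :
    ∃ c, IsUnderline w c := by
  refine ⟨{
      support := w.support
      consecutive := w.consecutive
      cups := ∅
      rays := w.arrows
      cups_finite := Set.finite_empty
      cups_lt := by simp
      cups_subset := by simp
      rays_subset := fun _ => Weight.mem_support_of_mem_arrows
      cups_disjoint := by simp
      rays_cups_disjoint := by simp
      cups_noncrossing := by simp
      rays_cups_noncrossing := by simp }, ⟨rfl, ?_, by simp, fun _ => id, ?_⟩, by simp⟩
  · rintro k ⟨hks, hkr, -⟩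
    rcases hw : w.label k with _ | l
    · simp [Weight.support, hw] at hks
    · cases l <;> simp_all
  · exact fun r _ t _ hrt => h r t hrt

theorem IsUnderline.exists_of_crossOut {w : Weight} {i j : ℤ} (hij : i < j)
    (hi : i ∈ w.downs) (hj : j ∈ w.ups) (hgap : ∀ k ∈ Set.Ioo i j, k ∉ w.arrows)
    {hsi : i ∈ w.support} {hsj : j ∈ w.support} {c' : ArcDiagram}
    (hc' : IsUnderline (w.crossOut hsi hsj) c') : ∃ c, IsUnderline w c := by
  have hlabel := w.crossOut_label hsi hsj
  have hsupp : ∀ k, (k = i ∨ k = j) → k ∈ c'.support := fun k hk => by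
    rw [hc'.1.1]
    simp [Weight.support, hlabel, hk]
  have hcross : ∀ k, (k = i ∨ k = j) → k ∉ (w.crossOut hsi hsj).arrows := fun k hk => by
    simp [hlabel, if_pos hk]
  have hgap' : ∀ k ∈ Set.Ioo i j, k ∉ (w.crossOut hsi hsj).arrows := fun k hk => by
    rw [Weight.mem_arrows, hlabel, if_neg (by rintro (rfl | rfl) <;> simp at hk)]
    exact hgap k hk
  exact ⟨_, hc'.addCup hij (hsupp i (Or.inl rfl)) (hsupp j (Or.inr rfl))
    (hc'.1.notMem_ends_of_notMem_arrows (hcross i (Or.inl rfl)))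
    (hc'.1.notMem_ends_of_notMem_arrows (hcross j (Or.inr rfl)))
    (fun k hk => ⟨hc'.1.notMem_rays_of_notMem_arrows (hgap' k hk),
      hc'.1.notMem_ends_of_notMem_arrows (hgap' k hk)⟩)
    (fun k hki hkj => by simp [hlabel, hki, hkj]) hi hj⟩

/-- Joining an adjacent `∨ ∧` pair by a cup reduces to a weight with fewer inversions; the
induction runs on whichever of the two sets of inverted labels is finite. -/
theorem exists_underline_of_min_encard_le (n : ℕ) (w : Weight)
    (hw : min w.upsAfterDown.encard w.downsBeforeUp.encard ≤ n) : ∃ c, IsUnderline w c := by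
  induction n using Nat.strong_induction_on generalizing w with | _ n ih => ?_
  by_cases hinv : ∃ i j, i < j ∧ i ∈ w.downs ∧ j ∈ w.ups
  · obtain ⟨i, j, hij, hi, hj⟩ := hinv
    obtain ⟨i, j, hij, hi, hj, hgap⟩ := w.exists_adjacent_inversion hij hi hj
    have hsi := Weight.mem_support_of_mem_arrows (Or.inl hi)
    have hsj := Weight.mem_support_of_mem_arrows (Or.inr hj)
    have hlt := (w.min_encard_crossOut_add_one_le hij hi hj hsi hsj).trans hw
    obtain _ | n := n
    · simp at hlt
    obtain ⟨c', hc'⟩ := ih n n.lt_succ_self _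
      ((ENat.add_le_add_iff_right ENat.one_ne_top).1 (by exact_mod_cast hlt))
    exact hc'.exists_of_crossOut hij hi hj hgap
  · push Not at hinv
    exact exists_underline_of_no_inversion fun i j hij h => hinv i j hij h.1 h.2

theorem exists_underline (w : Weight) : ∃ c, IsUnderline w c := by
  have hfin : min w.upsAfterDown.encard w.downsBeforeUp.encard ≠ ⊤ := by
    rcases w.finite_upsAfterDown_or_finite_downsBeforeUp with h | h
    · exact ((min_le_left _ _).trans_lt (Set.encard_lt_top_iff.2 h)).ne
    · exact ((min_le_right _ _).trans_lt (Set.encard_lt_top_iff.2 h)).ne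
  obtain ⟨n, hn⟩ := ENat.ne_top_iff_exists.1 hfin
  exact exists_underline_of_min_encard_le n w hn.symm.le

/-- Each cup has an endpoint in the finite set `X` of `∧`'s (or `∨`'s) of `v` and spans at most
`2 |X|` labels `∨`, `∧`; off the cups `w` agrees with `v`. -/
theorem finite_setOf_sim_orientedCup {v : Weight} (hfin : v.ups.Finite ∨ v.downs.Finite) :
    {w | Sim w v ∧ ∃ c, OrientedCup c w ∧ OrientedCup c v}.Finite := by
  set S := {w | Sim w v ∧ ∃ c, OrientedCup c w ∧ OrientedCup c v}
  obtain ⟨X, hX, hXc⟩ : ∃ X : Set ℤ, X.Finite ∧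
      ∀ c, OrientedCup c v → ∀ p ∈ c.cups, p.1 ∈ X ↔ p.2 ∉ X := by
    rcases hfin with h | h
    exacts [⟨_, h, fun _ hc _ hp => hc.fst_mem_ups_iff hp⟩,
      ⟨_, h, fun _ hc _ hp => hc.fst_mem_downs_iff hp⟩]
  set K := ⋃ x ∈ X, orderBall v.arrows x (2 * X.ncard)
  have hK : K.Finite := hX.biUnion fun x _ => finite_orderBall _ _ _
  have hoff : ∀ w ∈ S, ∀ k ∉ K, w.label k = v.label k := by
    rintro w ⟨hsim, c, hcw, hcv⟩ k hk
    refine hcw.label_eq_of_notMem_ends hsim hcv hfin fun he => hk ?_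
    refine hcv.ends_subset_biUnion_orderBall (hXc c hcv) ?_ he
    rw [← ArcDiagram.encard_inter_ends (hXc c hcv), hX.cast_ncard_eq]
    exact Set.encard_le_encard Set.inter_subset_left
  have hinj : Set.InjOn (fun w : Weight => w.ups ∩ K) S := by
    intro w₁ hw₁ w₂ hw₂ h
    refine (hw₁.1.trans hw₂.1.symm).eq_of_ups_eq (Set.ext fun k => ?_)
    by_cases hk : k ∈ K
    · simpa [hk] using Set.ext_iff.1 h k
    · simp only [Weight.mem_ups, hoff w₁ hw₁ k hk, hoff w₂ hw₂ k hk]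
  refine Set.Finite.of_finite_image (hK.finite_subsets.subset ?_) hinj
  rintro _ ⟨w, -, rfl⟩
  exact Set.inter_subset_right

namespace Weight

noncomputable def relabelRays (v : Weight) {c : ArcDiagram} (hc : OrientedCup c v) (t : ℤ) :
    Weight where
  label k := if k ∈ c.rays then some (if k < t then Label.up else Label.down) else v.label k
  consecutive a b d hab hbd ha hd := by
    have hsome : ∀ k, (if k ∈ c.rays then some (if k < t then Label.up else Label.down)
        else v.label k).isSome = (v.label k).isSome := fun k => by
      by_cases hk : k ∈ c.rays
      · have : k ∈ v.support := hc.1 ▸ c.rays_subset hk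
        rw [if_pos hk]
        simpa [Weight.support] using this.symm
      · rw [if_neg hk]
    rw [hsome] at ha hd ⊢
    exact v.consecutive a b d hab hbd ha hd
  tail := by
    refine ⟨c.ends_finite.toFinset, fun i j hij hi hj ⟨h1, h2⟩ => ?_⟩
    simp only [Set.Finite.mem_toFinset] at hi hj
    have hray : ∀ k ∉ c.ends, (if k ∈ c.rays then some (if k < t then Label.up else Label.down)
        else v.label k) ∈ ({some Label.down, some Label.up} : Set _) → k ∈ c.rays := by
      intro k hk hlab
      by_contra hr
      rw [if_neg hr] at hlab
      exact hr ((hc.arrows_eq ▸ hlab : k ∈ c.rays ∪ c.ends).resolve_right hk)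
    have hir := hray i hi (Or.inl h1)
    have hjr := hray j hj (Or.inr h2)
    rw [if_pos hir] at h1
    rw [if_pos hjr] at h2
    by_cases hit : i < t
    · simp [hit] at h1
    by_cases hjt : j < t
    · omega
    · simp [hjt] at h2

variable {v : Weight} {c : ArcDiagram} {k t : ℤ}

theorem relabelRays_label_of_mem (hc : OrientedCup c v) (hk : k ∈ c.rays) :
    (v.relabelRays hc t).label k = some (if k < t then Label.up else Label.down) :=
  if_pos hk

theorem relabelRays_label_of_notMem (hc : OrientedCup c v) (hk : k ∉ c.rays) :
    (v.relabelRays hc t).label k = v.label k :=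
  if_neg hk

theorem sim_relabelRays (hd : v.downs.Infinite) (hu : v.ups.Infinite) (hc : OrientedCup c v)
    (t : ℤ) : Sim v (v.relabelRays hc t) := by
  have hray : ∀ k ∈ v.arrows, k ∉ c.ends → k ∈ c.rays := fun k hk hke =>
    (hc.arrows_eq ▸ hk : k ∈ c.rays ∪ c.ends).resolve_right hke
  refine sim_of_infinite (fun k hk => relabelRays_label_of_notMem hc
    (hc.notMem_rays_of_notMem_arrows hk)) (fun k hk => ?_) hd ?_ hu ?_
  · by_cases hr : k ∈ c.rays
    · by_cases hkt : k < t <;> simp [relabelRays_label_of_mem hc hr, hkt]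
    · rwa [mem_arrows, relabelRays_label_of_notMem hc hr]
  · refine ((infinite_inter_Ici_of_not_bddAbove (not_bddAbove_downs hd hu) t).sdiff
      c.ends_finite).mono fun k hk' => ?_
    obtain ⟨⟨hk, hkt⟩, hke⟩ := hk'
    rw [mem_downs, relabelRays_label_of_mem hc (hray k (Or.inl hk) hke), if_neg (not_lt.2 hkt)]
  · refine ((infinite_inter_Iio_of_not_bddBelow (not_bddBelow_ups hd hu) t).sdiff
      c.ends_finite).mono fun k hk' => ?_
    obtain ⟨⟨hk, hkt⟩, hke⟩ := hk'
    rw [mem_ups, relabelRays_label_of_mem hc (hray k (Or.inr hk) hke), if_pos hkt.out]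

end Weight

theorem IsUnderline.relabelRays {v : Weight} {c : ArcDiagram} (hc : IsUnderline v c) (t : ℤ) :
    IsUnderline (v.relabelRays hc.1 t) c := by
  have hsupp := hc.1.1
  have hend : ∀ p ∈ c.cups, p.1 ∉ c.rays ∧ p.2 ∉ c.rays := fun p hp =>
    ⟨fun hr => ArcDiagram.notMem_ends_of_mem_rays hr (ArcDiagram.fst_mem_ends hp),
      fun hr => ArcDiagram.notMem_ends_of_mem_rays hr (ArcDiagram.snd_mem_ends hp)⟩
  refine ⟨⟨?_, fun k hk => ?_, fun p hp => ?_, fun r hr => ?_, fun r hr s hs hrs => ?_⟩,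
    fun p hp => ?_⟩
  · ext k
    rw [show k ∈ c.support ↔ k ∈ v.support from hsupp ▸ Iff.rfl]
    by_cases hr : k ∈ c.rays
    · have : k ∈ v.support := hsupp ▸ c.rays_subset hr
      simpa [Weight.support, Weight.relabelRays_label_of_mem _ hr] using this
    · simp [Weight.support, Weight.relabelRays_label_of_notMem _ hr]
  · rw [Weight.relabelRays_label_of_notMem _ hk.2.1]
    exact hc.1.2.1 k hk
  · rw [Weight.relabelRays_label_of_notMem _ (hend p hp).1,
      Weight.relabelRays_label_of_notMem _ (hend p hp).2]
    exact hc.1.2.2.1 p hp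
  · by_cases hrt : r < t <;> simp [Weight.relabelRays_label_of_mem _ hr, hrt]
  · rw [Weight.relabelRays_label_of_mem _ hr, Weight.relabelRays_label_of_mem _ hs]
    by_cases hrt : r < t
    · simp [hrt]
    · simp [hrt, show ¬s < t by omega]
  · rw [Weight.relabelRays_label_of_notMem _ (hend p hp).1]
    exact hc.2 p hp

theorem infinite_setOf_subW {v : Weight} (hd : v.downs.Infinite) (hu : v.ups.Infinite) :
    {w | SubW w v}.Infinite := by
  obtain ⟨c, hc⟩ := exists_underline v
  have hrays : c.rays.Infinite := (hd.sdiff c.ends_finite).mono fun k hk =>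
    (hc.1.arrows_eq ▸ Or.inl hk.1 : k ∈ c.rays ∪ c.ends).resolve_right hk.2
  refine Set.infinite_of_injOn_mapsTo (f := v.relabelRays hc.1) ?_
    (fun t _ => ⟨(Weight.sim_relabelRays hd hu hc.1 t).symm, c, hc.relabelRays t, hc.1⟩) hrays
  intro t₁ ht₁ t₂ ht₂ h
  by_contra hne
  wlog hlt : t₁ < t₂ generalizing t₁ t₂
  · exact this ht₂ ht₁ h.symm (Ne.symm hne) (lt_of_le_of_ne (not_lt.1 hlt) (Ne.symm hne))
  have := congrArg (fun w => w.label t₁) h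
  simp [Weight.relabelRays_label_of_mem _ ht₁, hlt] at this

theorem OrientedCup.exists_consecutive_downs_notMem_ends {w : Weight} {c : ArcDiagram}
    (h : OrientedCup c w) (hd : w.downs.Infinite) (hu : w.ups.Infinite) :
    ∃ r₁ r₂, r₁ < r₂ ∧ r₁ ∈ w.downs ∧ r₂ ∈ w.downs ∧ r₁ ∉ c.ends ∧ r₂ ∉ c.ends ∧
      ∀ k ∈ Set.Ioo r₁ r₂, k ∉ w.arrows := by
  obtain ⟨M, hM⟩ := c.ends_finite.bddAbove
  obtain ⟨r₁, hr₁, hMr₁⟩ := not_bddAbove_iff.1 (Weight.not_bddAbove_downs hd hu) M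
  set A := w.arrows ∩ Set.Ioi r₁
  have hA : A.Nonempty := by
    obtain ⟨d, hd', hrd⟩ := not_bddAbove_iff.1 (Weight.not_bddAbove_downs hd hu) r₁
    exact ⟨d, Or.inl hd', hrd⟩
  have hAb : BddBelow A := ⟨r₁, fun k hk => hk.2.le⟩
  obtain ⟨hr₂, hr₁₂⟩ : sInf A ∈ A := Int.csInf_mem hA hAb
  have hnotEnd : ∀ k, r₁ ≤ k → k ∉ c.ends := fun k hk he => (hMr₁.trans_le hk).not_ge (hM he)
  have hray : ∀ k ∈ w.arrows, r₁ ≤ k → k ∈ c.rays := fun k hk hrk =>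
    (h.arrows_eq ▸ hk : k ∈ c.rays ∪ c.ends).resolve_right (hnotEnd k hrk)
  have hr₂ray := hray _ hr₂ hr₁₂.out.le
  have hr₂d : sInf A ∈ w.downs := h.mem_downs_of_mem_rays hr₂ray fun hu =>
    hr₁₂.out.not_ge (h.le_of_mem_rays (hray r₁ (Or.inl hr₁) le_rfl) hr₂ray hr₁ hu)
  exact ⟨r₁, sInf A, hr₁₂, hr₁, hr₂d, hnotEnd r₁ le_rfl, hnotEnd _ hr₁₂.out.le,
    fun k hk hka => (csInf_le hAb ⟨hka, hk.1⟩).not_gt hk.2⟩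

/-- The second of two consecutive `∨`-rays beyond all cups is relabelled `∧`, and the two are
joined by a cup. -/
theorem IsUnderline.exists_sim_ncard_cups_eq_succ {w : Weight} {c : ArcDiagram}
    (hc : IsUnderline w c) (hd : w.downs.Infinite) (hu : w.ups.Infinite) :
    ∃ w', Sim w w' ∧ ∃ c', IsUnderline w' c' ∧ c'.cups.ncard = c.cups.ncard + 1 := by
  obtain ⟨r₁, r₂, hr₁₂, hr₁, hr₂, hr₁e, hr₂e, hgap⟩ :=
    hc.1.exists_consecutive_downs_notMem_ends hd hu
  have hsupp : r₂ ∈ w.support := Weight.mem_support_of_mem_arrows (Or.inl hr₂)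
  have hsupp₁ : r₁ ∈ c.support := hc.1.1 ▸ Weight.mem_support_of_mem_arrows (Or.inl hr₁)
  set w' := w.update r₂ Label.up hsupp
  have hoff : ∀ k, k ≠ r₂ → w'.label k = w.label k := fun k hk =>
    w.update_label_of_ne _ hsupp hk
  refine ⟨w', sim_of_infinite (fun k hk => hoff k fun e => hk (e ▸ Or.inl hr₂)) (fun k hk => ?_)
    hd ((hd.sdiff (Set.finite_singleton r₂)).mono fun k hk => ?_) hu (hu.mono fun k hk => ?_),
    _, hc.addCup hr₁₂ hsupp₁ (hc.1.1 ▸ hsupp) hr₁e hr₂e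
      (fun k hk => ⟨hc.1.notMem_rays_of_notMem_arrows (hgap k hk),
        hc.1.notMem_ends_of_notMem_arrows (hgap k hk)⟩)
      (fun k _ hk => hoff k hk) ((hoff r₁ hr₁₂.ne).trans hr₁) (w.update_label_self _ _ hsupp), ?_⟩
  · by_cases hkr : k = r₂
    · exact Or.inr (hkr ▸ w.update_label_self _ _ hsupp)
    · rwa [Weight.mem_arrows, hoff k hkr]
  · rw [Weight.mem_downs, hoff k hk.2]
    exact hk.1
  · by_cases hkr : k = r₂
    · exact hkr ▸ w.update_label_self _ _ hsupp
    · rwa [Weight.mem_ups, hoff k hkr]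
  · exact Set.ncard_insert_of_notMem (fun h => hr₁e (ArcDiagram.fst_mem_ends h)) c.cups_finite

theorem exists_sim_underline_le_ncard_cups {v : Weight} (hd : v.downs.Infinite)
    (hu : v.ups.Infinite) (N : ℕ) : ∃ w, Sim v w ∧ ∃ c, IsUnderline w c ∧ N ≤ c.cups.ncard := by
  induction N with
  | zero =>
    obtain ⟨c, hc⟩ := exists_underline v
    exact ⟨v, Sim.refl v, c, hc, Nat.zero_le _⟩
  | succ N ih =>
    obtain ⟨w, hvw, c, hc, hN⟩ := ih
    obtain ⟨w', hww', c', hc', hcard⟩ := hc.exists_sim_ncard_cups_eq_succ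
      ((Set.infinite_iff_infinite_of_encard_eq_encard hvw.encard_downs_eq).1 hd)
      ((Set.infinite_iff_infinite_of_encard_eq_encard hvw.encard_ups_eq).1 hu)
    exact ⟨w', hvw.trans hww', c', hc', by omega⟩

theorem finite_setOf_subW_iff (v : Weight) :
    {w | SubW w v}.Finite ↔ v.ups.Finite ∨ v.downs.Finite := by
  refine ⟨fun h => ?_, fun h => (finite_setOf_sim_orientedCup h).subset
    fun w ⟨hsim, c, hc, hcv⟩ => ⟨hsim, c, hc.1, hcv⟩⟩
  by_contra hinf
  push Not at hinf
  exact infinite_setOf_subW hinf.2 hinf.1 h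

theorem exists_bound_ncard_cups_iff {Λ : Set Weight} (hΛ : IsBlock Λ) {v : Weight}
    (hv : v ∈ Λ) :
    (∃ N : ℕ, ∀ w ∈ Λ, ∀ c : ArcDiagram, IsUnderline w c → c.cups.ncard ≤ N) ↔
      v.ups.Finite ∨ v.downs.Finite := by
  constructor
  · rintro ⟨N, hN⟩
    by_contra hinf
    push Not at hinf
    obtain ⟨w, hvw, c, hc, hcard⟩ := exists_sim_underline_le_ncard_cups hinf.2 hinf.1 (N + 1)
    have := hN w ((hΛ.mem_iff_sim hv).2 hvw) c hc
    omega
  · rintro (h | h)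
    · refine ⟨v.ups.ncard, fun w hw c hc => ?_⟩
      rw [← Nat.cast_le (α := ℕ∞), c.cups_finite.cast_ncard_eq, h.cast_ncard_eq,
        ((hΛ.mem_iff_sim hv).1 hw).encard_ups_eq]
      exact hc.1.encard_cups_le_ups
    · refine ⟨v.downs.ncard, fun w hw c hc => ?_⟩
      rw [← Nat.cast_le (α := ℕ∞), c.cups_finite.cast_ncard_eq, h.cast_ncard_eq,
        ((hΛ.mem_iff_sim hv).1 hw).encard_downs_eq]
      exact hc.1.encard_cups_le_downs

/-- Let `Λ` be a block and `λ ∈ Λ`. The set of weights `μ` with `μ ⊂ λ` is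
finite if and only if `def(Λ) = sup {def(μ) : μ ∈ Λ} < ∞`. -/
theorem statement_5 (Λ : Set Weight) (hΛ : IsBlock Λ) (v : Weight) (hv : v ∈ Λ) :
    {w : Weight | SubW w v}.Finite ↔
      ∃ N : ℕ, ∀ w ∈ Λ, ∀ c : ArcDiagram, IsUnderline w c → c.cups.ncard ≤ N := by
  rw [finite_setOf_subW_iff, exists_bound_ncard_cups_iff hΛ hv]

end BrundanStroppel
end

section
/- Let Λ be a block of bounded weights each having p labels ∧ and q labels ∨, and let Δ be the Khovanov block containing the closures cl(λ) for λ ∈ Λ. If λ ∈ Δ ∖ cl(Λ) and μ ≥ λ in the Bruhat order, then μ ∈ Δ ∖ cl(Λ). -/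
/-!
Common combinatorial framework for Brundan–Stroppel, "Highest weight categories arising
from Khovanov's diagram algebra I: cellularity": weights, blocks, the Bruhat order,
cup/cap diagrams, oriented cup/cap/circle diagrams, degrees, and the abstract properties
of the diagrammatically defined multiplications.
-/

namespace BrundanStroppel

open scoped Classical

lemma sim_symm {a b : Weight} (h : Sim a b) : Sim b a := by
  obtain ⟨s, n, c, ⟨d⟩, ⟨u⟩⟩ := h
  exact ⟨fun i => (s i).symm, fun i => (n i).symm, fun i => (c i).symm, ⟨d.symm⟩, ⟨u.symm⟩⟩

lemma sim_trans {a b c : Weight} (h1 : Sim a b) (h2 : Sim b c) : Sim a c := by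
  obtain ⟨s1, n1, c1, ⟨d1⟩, ⟨u1⟩⟩ := h1
  obtain ⟨s2, n2, c2, ⟨d2⟩, ⟨u2⟩⟩ := h2
  exact ⟨fun i => (s1 i).trans (s2 i), fun i => (n1 i).trans (n2 i),
    fun i => (c1 i).trans (c2 i), ⟨d1.trans d2⟩, ⟨u1.trans u2⟩⟩

lemma bruhatStep_sim {a b : Weight} (h : BruhatStep a b) : Sim a b := by
  obtain ⟨i, j, hij, hai, haj, hbi, hbj, hrest⟩ := h
  have hne : i ≠ j := hij.ne
  refine ⟨?_, ?_, ?_, ?_, ?_⟩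
  · intro k
    rcases eq_or_ne k i with rfl | hki
    · simp [hai, hbi]
    rcases eq_or_ne k j with rfl | hkj
    · simp [haj, hbj]
    · rw [hrest k hki hkj]
  · intro k
    rcases eq_or_ne k i with rfl | hki
    · simp [hai, hbi]
    rcases eq_or_ne k j with rfl | hkj
    · simp [haj, hbj]
    · rw [hrest k hki hkj]
  · intro k
    rcases eq_or_ne k i with rfl | hki
    · simp [hai, hbi]
    rcases eq_or_ne k j with rfl | hkj
    · simp [haj, hbj]
    · rw [hrest k hki hkj]
  · refine ⟨Equiv.subtypeEquiv (Equiv.swap i j) fun k => ?_⟩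
    rcases eq_or_ne k i with rfl | hki
    · rw [Equiv.swap_apply_left]
      simp [hai, hbj]
    rcases eq_or_ne k j with rfl | hkj
    · rw [Equiv.swap_apply_right]
      simp [haj, hbi]
    · rw [Equiv.swap_apply_of_ne_of_ne hki hkj]
      simp only [Set.mem_setOf_eq, hrest k hki hkj]
  · refine ⟨Equiv.subtypeEquiv (Equiv.swap i j) fun k => ?_⟩
    rcases eq_or_ne k i with rfl | hki
    · rw [Equiv.swap_apply_left]
      simp [hai, hbj]
    rcases eq_or_ne k j with rfl | hkj
    · rw [Equiv.swap_apply_right]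
      simp [haj, hbi]
    · rw [Equiv.swap_apply_of_ne_of_ne hki hkj]
      simp only [Set.mem_setOf_eq, hrest k hki hkj]

lemma closure_step {p q : ℕ} {w a b : Weight} (hs : BruhatStep a b)
    (hw : IsClosureOf p q w b) :
    ∃ w' : Weight, Sim w w' ∧ IsClosureOf p q w' a := by
  obtain ⟨i, j, hij, hai, haj, hbi, hbj, hrest⟩ := hs
  obtain ⟨hfin, hagree, L, R, hsupp, hLfin, hRfin, hLcard, hRcard, hLlt, hRgt, hLlab, hRlab⟩ := hw
  -- locate i and j inside the support of w
  have hisupp : i ∈ b.support := by simp [Weight.support, hbi]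
  have hjsupp : j ∈ b.support := by simp [Weight.support, hbj]
  have hiL : i ∉ L := fun h => by simp [hLlab i h] at hbi
  have hjR : j ∉ R := fun h => by simp [hRlab j h] at hbj
  have hiw : i ∈ w.support := by
    rcases (hsupp ▸ hisupp) with (hL | hw') | hR
    · exact absurd hL hiL
    · exact hw'
    · exfalso
      rcases (hsupp ▸ hjsupp) with (hL | hw') | hR'
      · exact absurd hij (not_lt.2 ((hLlt j hL).2 i hR).le)
      · exact absurd hij (not_lt.2 (hRgt i hR j hw').le)
      · exact hjR hR'
  have hjw : j ∈ w.support := by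
    rcases (hsupp ▸ hjsupp) with (hL | hw') | hR
    · exact absurd hij (not_lt.2 ((hLlt j hL).1 i hiw).le)
    · exact hw'
    · exact absurd hR hjR
  have hiR : i ∉ R := fun h => absurd hij (not_lt.2 (hRgt i h j hjw).le)
  have hjL : j ∉ L := fun h => absurd hij (not_lt.2 ((hLlt j h).1 i hiw).le)
  have hwi : w.label i = some Label.up := (hagree i hiw).symm.trans hbi
  have hwj : w.label j = some Label.down := (hagree j hjw).symm.trans hbj
  -- define w'
  set f : ℤ → Option Label := fun k =>
    if k = i then some Label.down else if k = j then some Label.up else w.label k with hf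
  have hfsome : ∀ k, (f k).isSome ↔ (w.label k).isSome := by
    intro k
    rcases eq_or_ne k i with rfl | hki
    · simp [hf, hwi]
    rcases eq_or_ne k j with rfl | hkj
    · simp [hf, hij.ne', hwj]
    · simp [hf, hki, hkj]
  have hw' : ∃ w' : Weight, w'.label = f := by
    refine ⟨⟨f, ?_, ?_⟩, rfl⟩
    · intro x y z hxy hyz hx hz
      rw [hfsome] at *
      exact w.consecutive x y z hxy hyz hx hz
    · refine ⟨hfin.toFinset, fun x y hxy hx hy hc => ?_⟩
      have hx' : (f x).isSome := by rw [hc.1]; rfl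
      rw [hfsome] at hx'
      exact hx (hfin.mem_toFinset.2 hx')
  obtain ⟨w', hw'f⟩ := hw'
  have hsupp' : w'.support = w.support := by
    ext k
    simp only [Weight.support, Set.mem_setOf_eq, hw'f, hfsome]
  have hstep : BruhatStep w' w := by
    refine ⟨i, j, hij, ?_, ?_, hwi, hwj, fun k hki hkj => ?_⟩
    · simp [hw'f, hf]
    · simp [hw'f, hf, hij.ne']
    · simp [hw'f, hf, hki, hkj]
  have hsuppab : a.support = b.support := by
    ext k
    simp only [Weight.support, Set.mem_setOf_eq]
    rcases eq_or_ne k i with rfl | hki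
    · simp [hai, hbi]
    rcases eq_or_ne k j with rfl | hkj
    · simp [haj, hbj]
    · rw [hrest k hki hkj]
  refine ⟨w', sim_symm (bruhatStep_sim hstep), ?_, ?_, L, R, ?_, hLfin, hRfin, hLcard,
    hRcard, ?_, ?_, ?_, ?_⟩
  · rw [hsupp']; exact hfin
  · intro k hk
    rw [hsupp'] at hk
    rcases eq_or_ne k i with rfl | hki
    · simp [hw'f, hf, hai]
    rcases eq_or_ne k j with rfl | hkj
    · simp [hw'f, hf, hij.ne', haj]
    · rw [← hrest k hki hkj, hagree k hk]
      simp [hw'f, hf, hki, hkj]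
  · rw [hsuppab, hsupp', hsupp]
  · intro x hx
    rw [hsupp']
    exact hLlt x hx
  · intro r hr k hk
    rw [hsupp'] at hk
    exact hRgt r hr k hk
  · intro x hx
    have hxi : x ≠ i := fun h => absurd ((hLlt x hx).1 i hiw) (by simp [h])
    have hxj : x ≠ j := fun h => absurd ((hLlt x hx).1 j hjw) (by simp [h])
    rw [← hrest x hxi hxj]
    exact hLlab x hx
  · intro r hr
    have hri : r ≠ i := fun h => absurd (hRgt r hr i hiw) (by simp [h])
    have hrj : r ≠ j := fun h => absurd (hRgt r hr j hjw) (by simp [h])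
    rw [← hrest r hri hrj]
    exact hRlab r hr

/-- Let `Λ` be a block of bounded weights each having `p` labels `∧` and
`q` labels `∨`, and let `Δ` be the Khovanov block containing the closures `cl(λ)` for
`λ ∈ Λ`. If `λ ∈ Δ ∖ cl(Λ)` and `μ ≥ λ` in the Bruhat order, then `μ ∈ Δ ∖ cl(Λ)`. -/
theorem statement_11 (Λ : Set Weight) (hΛ : IsBlock Λ) (p q : ℕ)
    (hpq : ∀ w ∈ Λ, w.support.Finite ∧
      {i : ℤ | w.label i = some Label.up}.ncard = p ∧
      {i : ℤ | w.label i = some Label.down}.ncard = q)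
    (Δ : Set Weight) (hΔ : IsBlock Δ)
    (hcl : ∀ w ∈ Λ, ∀ u : Weight, IsClosureOf p q w u → u ∈ Δ)
    (v : Weight) (hv : v ∈ Δ) (hvout : ¬ ∃ w ∈ Λ, IsClosureOf p q w v)
    (u : Weight) (hu : BruhatLE v u) :
    u ∈ Δ ∧ ¬ ∃ w ∈ Λ, IsClosureOf p q w u := by
  obtain ⟨w0, hΔeq⟩ := hΔ
  obtain ⟨w1, hΛeq⟩ := hΛ
  induction hu with
  | refl => exact ⟨hv, hvout⟩
  | tail _ step ih =>
    rename_i b c _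
    refine ⟨?_, ?_⟩
    · have h1 := ih.1
      rw [hΔeq] at h1 ⊢
      exact sim_trans h1 (bruhatStep_sim step)
    · rintro ⟨w, hwΛ, hwclos⟩
      obtain ⟨w', hww', hclos'⟩ := closure_step step hwclos
      refine ih.2 ⟨w', ?_, hclos'⟩
      have h2 := hwΛ
      rw [hΛeq] at h2 ⊢
      exact sim_trans h2 hww'
end BrundanStroppel
end
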